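/- arXiv:2506.14357 — 11 statements merged into one kernel-verified Lean document; each statement's English description precedes it below -/
import Mathlib

section
/- Let C be a conjugation on a complex Hilbert space H. (a) If J is any conjugation on H, then the map U : H → H defined by U x = C(J x) is a unitary (linear, bijective, inner-product preserving) operator on H which is C-self-adjoint, i.e. U x = C(U*(C x)) for all x ∈ H. (b) Conversely, if U is a unitary operator on H satisfying U x = C(U*(C x)) for all x ∈ H, then the map J : H → H defined by J x = C(U x) is a conjugation on H, and U x = C(J x) for all x. Hence J ↦ C∘J is a bijection from the set of conjugations on H onto the set of C-self-adjoint unitary operators on H. -/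
local notation "⟪" x ", " y "⟫" => @inner ℂ _ _ x y

/-- A conjugation on a complex inner product space: additive, conjugate-homogeneous,
isometric and involutive. -/
def IsConjugation {H : Type*} [NormedAddCommGroup H] [InnerProductSpace ℂ H]
    (C : H → H) : Prop :=
  (∀ x y, C (x + y) = C x + C y) ∧
  (∀ (a : ℂ) (x : H), C (a • x) = (starRingEnd ℂ) a • C x) ∧
  (∀ x, ‖C x‖ = ‖x‖) ∧
  (∀ x, C (C x) = x)

section Aux

variable {H : Type*} [NormedAddCommGroup H] [InnerProductSpace ℂ H]

lemma IsConjugation.sub {C : H → H} (hC : IsConjugation C) (x y : H) :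
    C (x - y) = C x - C y := by
  have hneg : C (-y) = - C y := by
    have := hC.2.1 (-1) y
    simpa using this
  rw [sub_eq_add_neg, hC.1, hneg, sub_eq_add_neg]

lemma IsConjugation.inner_conj {C : H → H} (hC : IsConjugation C) (x y : H) :
    ⟪C x, C y⟫ = ⟪y, x⟫ := by
  obtain ⟨hadd, hsmul, hnorm, hinv⟩ := hC
  have hI : (RCLike.I : ℂ) = Complex.I := rfl
  have h1 : C x + C y = C (x + y) := (hadd x y).symm
  have h2 : C x - C y = C (x - y) := (IsConjugation.sub ⟨hadd, hsmul, hnorm, hinv⟩ x y).symm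
  have h3 : C x - Complex.I • C y = C (x + Complex.I • y) := by
    rw [hadd, hsmul]
    simp [Complex.conj_I, sub_eq_add_neg, neg_smul]
  have h4 : C x + Complex.I • C y = C (x - Complex.I • y) := by
    rw [IsConjugation.sub ⟨hadd, hsmul, hnorm, hinv⟩, hsmul]
    simp [Complex.conj_I, sub_eq_add_neg, neg_smul]
  have n3 : ‖x + Complex.I • y‖ = ‖y - Complex.I • x‖ := by
    have : Complex.I • (y - Complex.I • x) = x + Complex.I • y := by
      rw [smul_sub, smul_smul]
      simp [Complex.I_mul_I, add_comm]
    rw [← this, norm_smul]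
    simp
  have n4 : ‖x - Complex.I • y‖ = ‖y + Complex.I • x‖ := by
    have : Complex.I • (y + Complex.I • x) = -(x - Complex.I • y) := by
      rw [smul_add, smul_smul]
      simp [Complex.I_mul_I, sub_eq_add_neg, add_comm]
    have h := congrArg norm this
    rw [norm_smul, norm_neg] at h
    simpa using h.symm
  rw [inner_eq_sum_norm_sq_div_four (𝕜 := ℂ) (C x) (C y),
      inner_eq_sum_norm_sq_div_four (𝕜 := ℂ) y x, hI,
      h1, h2, h3, h4, hnorm, hnorm, hnorm, hnorm, n3, n4,
      add_comm x y, norm_sub_rev x y]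

end Aux

/-- `J ↦ C ∘ J` is a bijection between conjugations and
`C`-self-adjoint unitary operators. -/
theorem stmt_0 {H : Type*} [NormedAddCommGroup H] [InnerProductSpace ℂ H] [CompleteSpace H]
    (C : H → H) (hC : IsConjugation C) :
    (∀ J : H → H, IsConjugation J →
      ∃ U : H →L[ℂ] H, (∀ x, U x = C (J x)) ∧ Function.Bijective U ∧
        (∀ x y, ⟪U x, U y⟫ = ⟪x, y⟫) ∧
        (∀ x, U x = C (ContinuousLinearMap.adjoint U (C x)))) ∧
    (∀ U : H →L[ℂ] H, Function.Bijective U → (∀ x y, ⟪U x, U y⟫ = ⟪x, y⟫) →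
      (∀ x, U x = C (ContinuousLinearMap.adjoint U (C x))) →
      ∃! J : H → H, IsConjugation J ∧ ∀ x, U x = C (J x)) := by
  obtain ⟨hCadd, hCsmul, hCnorm, hCinv⟩ := hC
  have hC' : IsConjugation C := ⟨hCadd, hCsmul, hCnorm, hCinv⟩
  constructor
  · intro J hJ
    have hJc := hJ
    obtain ⟨hJadd, hJsmul, hJnorm, hJinv⟩ := hJ
    -- the linear map x ↦ C (J x)
    have hlin : ∀ (a : ℂ) (x : H), C (J (a • x)) = a • C (J x) := by
      intro a x
      rw [hJsmul, hCsmul]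
      simp
    let Ulm : H →ₗ[ℂ] H :=
      { toFun := fun x => C (J x)
        map_add' := fun x y => by show C (J (x+y)) = C (J x) + C (J y); rw [hJadd, hCadd]
        map_smul' := fun a x => by simpa using hlin a x }
    have hUnorm : ∀ x, ‖Ulm x‖ = ‖x‖ := fun x => by
      simp only [Ulm, LinearMap.coe_mk, AddHom.coe_mk]
      rw [hCnorm, hJnorm]
    let U : H →L[ℂ] H := Ulm.mkContinuous 1 (fun x => by rw [hUnorm]; simp)
    have hUapp : ∀ x, U x = C (J x) := fun x => rfl
    refine ⟨U, hUapp, ?_, ?_, ?_⟩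
    · constructor
      · intro x y hxy
        have : J (C (U x)) = J (C (U y)) := by rw [hxy]
        rwa [hUapp, hUapp, hCinv, hCinv, hJinv, hJinv] at this
      · intro y
        exact ⟨J (C y), by rw [hUapp, hJinv, hCinv]⟩
    · intro x y
      rw [hUapp, hUapp, hC'.inner_conj, hJc.inner_conj]
    · intro x
      have hadj : ContinuousLinearMap.adjoint U (C x) = J (C (C x)) := by
        apply ext_inner_right ℂ
        intro w
        rw [ContinuousLinearMap.adjoint_inner_left, hUapp]
        have e1 : ⟪J (C (C x)), w⟫ = ⟪J w, C (C x)⟫ := by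
          have := hJc.inner_conj (C (C x)) (J w)
          rwa [hJinv] at this
        have e2 : ⟪C x, C (J w)⟫ = ⟪J w, x⟫ := hC'.inner_conj x (J w)
        rw [e2, e1, hCinv]
      rw [hadj, hCinv, hUapp]
  · intro U hbij hinner hsa
    refine ⟨fun x => C (U x), ⟨⟨?_, ?_, ?_, ?_⟩, ?_⟩, ?_⟩
    · intro x y; show C (U (x+y)) = C (U x) + C (U y); rw [map_add, hCadd]
    · intro a x
      show C (U (a • x)) = (starRingEnd ℂ) a • C (U x)
      rw [map_smul, hCsmul]
    · intro x
      show ‖C (U x)‖ = ‖x‖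
      rw [hCnorm]
      have : (‖U x‖ : ℝ) ^ 2 = ‖x‖ ^ 2 := by
        have h := hinner x x
        rw [inner_self_eq_norm_sq_to_K, inner_self_eq_norm_sq_to_K] at h
        exact_mod_cast h
      have h0 : (0:ℝ) ≤ ‖U x‖ := norm_nonneg _
      nlinarith [norm_nonneg x, norm_nonneg (U x)]
    · intro x
      show C (U (C (U x))) = x
      have hCU : C (U x) = ContinuousLinearMap.adjoint U (C x) := by
        rw [hsa x, hCinv]
      have hUadj : ∀ z, U (ContinuousLinearMap.adjoint U z) = z := by
        intro z
        obtain ⟨w, rfl⟩ := hbij.2 z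
        have : ContinuousLinearMap.adjoint U (U w) = w := by
          apply ext_inner_right ℂ
          intro v
          rw [ContinuousLinearMap.adjoint_inner_left, hinner]
        rw [this]
      rw [hCU, hUadj, hCinv]
    · intro x; show U x = C (C (U x)); rw [hCinv]
    · intro J' ⟨hJ'conj, hJ'⟩
      funext x
      show J' x = C (U x)
      rw [hJ' x, hCinv]
end

section
/- Let C be a conjugation on H, M a closed proper subspace of H, and V : M → H a bounded C-symmetric operator. For a bounded operator S : M⊥ → H, define Ṽ_S : H → H by Ṽ_S x = V(P_M x) + C(V*(C(P⊥ x))) + S(P⊥ x). Then the assignment S ↦ Ṽ_S is a bijection between the set of bounded operators S : M⊥ → H whose range is contained in C(M⊥) and which satisfy ⟨S f, C g⟩ = ⟨f, C(S g)⟩ for all f, g ∈ M⊥, and the set of all bounded C-self-adjoint extensions of V on H. In particular: for each such S the operator Ṽ_S is a bounded C-self-adjoint extension of V, every bounded C-self-adjoint extension of V equals Ṽ_S for some such S, and S is uniquely determined by Ṽ_S. -/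
local notation "⟪" x ", " y "⟫" => @inner ℂ _ _ x y

section Aux
variable {H : Type*} [NormedAddCommGroup H] [InnerProductSpace ℂ H] {C : H → H}

lemma conj_zero (hC : IsConjugation C) : C 0 = 0 := by
  have h := hC.1 0 0
  simp only [add_zero] at h
  exact (left_eq_add.mp h)

lemma conj_neg (hC : IsConjugation C) (x : H) : C (-x) = - C x := by
  have := hC.2.1 (-1) x
  simpa using this

lemma conj_sub (hC : IsConjugation C) (x y : H) : C (x - y) = C x - C y := by
  rw [sub_eq_add_neg, hC.1, conj_neg hC, sub_eq_add_neg]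

lemma conj_inner_conj (hC : IsConjugation C) (x y : H) : ⟪C x, C y⟫ = ⟪y, x⟫ := by
  obtain ⟨hadd, hsmul, hnorm, hinv⟩ := hC
  have hIsm : ∀ z : H, ‖Complex.I • z‖ = ‖z‖ := by
    intro z; rw [norm_smul, Complex.norm_I, one_mul]
  have h1 : ‖C x + C y‖ = ‖y + x‖ := by rw [← hadd, hnorm, add_comm]
  have h2 : ‖C x - C y‖ = ‖y - x‖ := by
    rw [← conj_sub ⟨hadd, hsmul, hnorm, hinv⟩, hnorm, norm_sub_rev]
  have h3 : ‖C x - Complex.I • C y‖ = ‖y - Complex.I • x‖ := by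
    have e1 : C (x + Complex.I • y) = C x - Complex.I • C y := by
      rw [hadd, hsmul, Complex.conj_I, neg_smul, ← sub_eq_add_neg]
    have e2 : Complex.I • (y - Complex.I • x) = x + Complex.I • y := by
      rw [smul_sub, smul_smul, Complex.I_mul_I, neg_one_smul, sub_neg_eq_add, add_comm]
    rw [← e1, hnorm, ← hIsm (y - Complex.I • x), e2]
  have h4 : ‖C x + Complex.I • C y‖ = ‖y + Complex.I • x‖ := by
    have e1 : C (x - Complex.I • y) = C x + Complex.I • C y := by
      rw [conj_sub ⟨hadd, hsmul, hnorm, hinv⟩, hsmul, Complex.conj_I, neg_smul, sub_neg_eq_add]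
    have e2 : Complex.I • (y + Complex.I • x) = -(x - Complex.I • y) := by
      rw [smul_add, smul_smul, Complex.I_mul_I, neg_one_smul, neg_sub]; abel
    rw [← e1, hnorm, ← hIsm (y + Complex.I • x), e2, norm_neg]
  rw [inner_eq_sum_norm_sq_div_four, inner_eq_sum_norm_sq_div_four]
  norm_num [h1, h2, h3, h4]

lemma conj_swap (hC : IsConjugation C) (x y : H) : ⟪C x, y⟫ = ⟪C y, x⟫ := by
  conv_lhs => rw [← hC.2.2.2 y]
  rw [conj_inner_conj hC]

variable [CompleteSpace H]

lemma exists_T (hC : IsConjugation C) (M : Submodule ℂ H) [CompleteSpace M]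
    (V : M →L[ℂ] H) :
    ∃ T : H →L[ℂ] H, ∀ x, T x = C ((ContinuousLinearMap.adjoint V (C x) : H)) := by
  obtain ⟨hadd, hsmul, hnorm, hinv⟩ := hC
  let T₀ : H →ₗ[ℂ] H :=
    { toFun := fun x => C ((ContinuousLinearMap.adjoint V (C x) : H))
      map_add' := fun x y => by
        rw [hadd, map_add, Submodule.coe_add, hadd]
      map_smul' := fun a x => by
        simp only [RingHom.id_apply]
        rw [hsmul, map_smul, Submodule.coe_smul, hsmul]
        simp }
  refine ⟨T₀.mkContinuous ‖ContinuousLinearMap.adjoint V‖ (fun x => ?_), fun x => rfl⟩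
  show ‖C ((ContinuousLinearMap.adjoint V (C x) : H))‖ ≤ _
  rw [hnorm]
  calc ‖((ContinuousLinearMap.adjoint V (C x) : H))‖
      = ‖ContinuousLinearMap.adjoint V (C x)‖ := rfl
    _ ≤ ‖ContinuousLinearMap.adjoint V‖ * ‖C x‖ := ContinuousLinearMap.le_opNorm _ _
    _ = ‖ContinuousLinearMap.adjoint V‖ * ‖x‖ := by rw [hnorm]

lemma csa_of_symm (hC : IsConjugation C) (W : H →L[ℂ] H)
    (h : ∀ x y, ⟪C y, W x⟫ = ⟪C x, W y⟫) (x : H) :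
    W x = C (ContinuousLinearMap.adjoint W (C x)) := by
  have key : C (W x) = ContinuousLinearMap.adjoint W (C x) := by
    apply ext_inner_left ℂ
    intro v
    rw [ContinuousLinearMap.adjoint_inner_right]
    calc ⟪v, C (W x)⟫ = (starRingEnd ℂ) ⟪C (W x), v⟫ := (inner_conj_symm _ _).symm
      _ = (starRingEnd ℂ) ⟪C v, W x⟫ := by rw [conj_swap hC]
      _ = (starRingEnd ℂ) ⟪C x, W v⟫ := by rw [h]
      _ = ⟪W v, C x⟫ := inner_conj_symm _ _
  rw [← key, hC.2.2.2]

lemma symm_of_csa (hC : IsConjugation C) (W : H →L[ℂ] H)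
    (h : ∀ x, W x = C (ContinuousLinearMap.adjoint W (C x))) (x y : H) :
    ⟪C y, W x⟫ = ⟪C x, W y⟫ := by
  rw [h x, conj_inner_conj hC, ContinuousLinearMap.adjoint_inner_left]

end Aux

/-- Raikh: `S ↦ Ṽ_S`, with
`Ṽ_S x = V(P_M x) + C(V*(C(P⊥ x))) + S(P⊥ x)`, is a bijection between the bounded
operators `S : M⊥ → H` with range in `C(M⊥)` satisfying `⟨S f, C g⟩ = ⟨f, C(S g)⟩`
and the bounded `C`-self-adjoint extensions of `V`. -/
theorem stmt_2 {H : Type*} [NormedAddCommGroup H] [InnerProductSpace ℂ H] [CompleteSpace H]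
    (C : H → H) (hC : IsConjugation C)
    (M : Submodule ℂ H) [CompleteSpace M] (hproper : M ≠ ⊤)
    (V : M →L[ℂ] H)
    (hV : ∀ x y : M, ⟪C (y : H), V x⟫ = ⟪C (V y), (x : H)⟫) :
    (∀ S : Mᗮ →L[ℂ] H,
      (∀ f : Mᗮ, S f ∈ C '' (Mᗮ : Set H)) →
      (∀ f g : Mᗮ, ⟪C (g : H), S f⟫ = ⟪C (S g), (f : H)⟫) →
      ∃ W : H →L[ℂ] H,
        (∀ x, W x = V (Submodule.orthogonalProjectionOnto M x)
            + C ((ContinuousLinearMap.adjoint V (C ((Submodule.orthogonalProjectionOnto Mᗮ x : H))) : H))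
            + S (Submodule.orthogonalProjectionOnto Mᗮ x)) ∧
        (∀ h : M, W h = V h) ∧
        (∀ x, W x = C (ContinuousLinearMap.adjoint W (C x)))) ∧
    (∀ W : H →L[ℂ] H, (∀ h : M, W h = V h) →
      (∀ x, W x = C (ContinuousLinearMap.adjoint W (C x))) →
      ∃! S : Mᗮ →L[ℂ] H,
        (∀ f : Mᗮ, S f ∈ C '' (Mᗮ : Set H)) ∧
        (∀ f g : Mᗮ, ⟪C (g : H), S f⟫ = ⟪C (S g), (f : H)⟫) ∧
        (∀ x, W x = V (Submodule.orthogonalProjectionOnto M x)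
            + C ((ContinuousLinearMap.adjoint V (C ((Submodule.orthogonalProjectionOnto Mᗮ x : H))) : H))
            + S (Submodule.orthogonalProjectionOnto Mᗮ x))) := by
  obtain ⟨T, hT⟩ := exists_T hC M V
  have hCC := hC.2.2.2
  have hCadd := hC.1
  constructor
  · -- Part 1
    intro S hSrange hSsymm
    set Wop : H →L[ℂ] H :=
      V.comp (Submodule.orthogonalProjectionOnto M)
        + T.comp (Mᗮ.subtypeL.comp (Submodule.orthogonalProjectionOnto Mᗮ))
        + S.comp (Submodule.orthogonalProjectionOnto Mᗮ) with hWdef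
    have hW : ∀ x, Wop x = V (Submodule.orthogonalProjectionOnto M x)
        + C ((ContinuousLinearMap.adjoint V (C ((Submodule.orthogonalProjectionOnto Mᗮ x : H))) : H))
        + S (Submodule.orthogonalProjectionOnto Mᗮ x) := by
      intro x
      simp only [hWdef, ContinuousLinearMap.add_apply, ContinuousLinearMap.comp_apply,
        Submodule.subtypeL_apply, hT]
    have key : ∀ x y : H, ⟪C y, Wop x⟫ =
        ⟪C (Submodule.orthogonalProjectionOnto M y : H), V (Submodule.orthogonalProjectionOnto M x)⟫
        + ⟪C (Submodule.orthogonalProjectionOnto Mᗮ y : H), V (Submodule.orthogonalProjectionOnto M x)⟫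
        + ⟪C (Submodule.orthogonalProjectionOnto Mᗮ x : H), V (Submodule.orthogonalProjectionOnto M y)⟫
        + ⟪C (Submodule.orthogonalProjectionOnto Mᗮ y : H), S (Submodule.orthogonalProjectionOnto Mᗮ x)⟫ := by
      intro x y
      have hy : ((Submodule.orthogonalProjectionOnto M y : H)) + (Submodule.orthogonalProjectionOnto Mᗮ y : H) = y :=
        M.starProjection_add_starProjection_orthogonal y
      rw [hW]
      conv_lhs => rw [← hy, hCadd]
      rw [inner_add_right, inner_add_right, inner_add_left, inner_add_left, inner_add_left]
      have hb1 : ⟪C (Submodule.orthogonalProjectionOnto M y : H),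
          C ((ContinuousLinearMap.adjoint V (C ((Submodule.orthogonalProjectionOnto Mᗮ x : H))) : H))⟫
          = ⟪C ((Submodule.orthogonalProjectionOnto Mᗮ x : H)), V (Submodule.orthogonalProjectionOnto M y)⟫ := by
        rw [conj_inner_conj hC, ← Submodule.coe_inner,
          ContinuousLinearMap.adjoint_inner_left]
      have hb2 : ⟪C (Submodule.orthogonalProjectionOnto Mᗮ y : H),
          C ((ContinuousLinearMap.adjoint V (C ((Submodule.orthogonalProjectionOnto Mᗮ x : H))) : H))⟫
          = 0 := by
        rw [conj_inner_conj hC]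
        exact Submodule.inner_right_of_mem_orthogonal
          (ContinuousLinearMap.adjoint V (C ((Submodule.orthogonalProjectionOnto Mᗮ x : H)))).2
          (Submodule.orthogonalProjectionOnto Mᗮ y).2
      have hc1 : ⟪C (Submodule.orthogonalProjectionOnto M y : H), S (Submodule.orthogonalProjectionOnto Mᗮ x)⟫ = 0 := by
        obtain ⟨m, hm, hmeq⟩ := hSrange (Submodule.orthogonalProjectionOnto Mᗮ x)
        rw [← hmeq, conj_inner_conj hC]
        exact Submodule.inner_left_of_mem_orthogonal
          (Submodule.orthogonalProjectionOnto M y).2 hm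
      rw [hb1, hb2, hc1]
      ring
    have hsymm : ∀ x y, ⟪C y, Wop x⟫ = ⟪C x, Wop y⟫ := by
      intro x y
      rw [key x y, key y x]
      have e1 : ⟪C (Submodule.orthogonalProjectionOnto M y : H), V (Submodule.orthogonalProjectionOnto M x)⟫
          = ⟪C (Submodule.orthogonalProjectionOnto M x : H), V (Submodule.orthogonalProjectionOnto M y)⟫ := by
        rw [hV (Submodule.orthogonalProjectionOnto M x) (Submodule.orthogonalProjectionOnto M y), conj_swap hC]
      have e4 : ⟪C (Submodule.orthogonalProjectionOnto Mᗮ y : H), S (Submodule.orthogonalProjectionOnto Mᗮ x)⟫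
          = ⟪C (Submodule.orthogonalProjectionOnto Mᗮ x : H), S (Submodule.orthogonalProjectionOnto Mᗮ y)⟫ := by
        rw [hSsymm (Submodule.orthogonalProjectionOnto Mᗮ x) (Submodule.orthogonalProjectionOnto Mᗮ y), conj_swap hC]
      rw [e1, e4]
      ring
    refine ⟨Wop, hW, ?_, csa_of_symm hC Wop hsymm⟩
    intro h
    have h1 : Submodule.orthogonalProjectionOnto M (h : H) = h :=
      Submodule.orthogonalProjectionOnto_mem_subspace_eq_self h
    have h2 : Submodule.orthogonalProjectionOnto Mᗮ (h : H) = 0 :=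
      Submodule.orthogonalProjectionOnto_apply_of_mem_orthogonal (M.le_orthogonal_orthogonal h.2)
    rw [hW, h1, h2]
    simp [conj_zero hC]
  · -- Part 2
    intro W hext hcsa
    have hsymm : ∀ x y, ⟪C y, W x⟫ = ⟪C x, W y⟫ := symm_of_csa hC W hcsa
    set S : Mᗮ →L[ℂ] H := W.comp Mᗮ.subtypeL - T.comp Mᗮ.subtypeL with hSdef
    have hS : ∀ f : Mᗮ, S f
        = W (f : H) - C ((ContinuousLinearMap.adjoint V (C (f : H)) : H)) := by
      intro f
      simp only [hSdef, ContinuousLinearMap.sub_apply, ContinuousLinearMap.comp_apply,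
        Submodule.subtypeL_apply, hT]
    have hform : ∀ x, W x = V (Submodule.orthogonalProjectionOnto M x)
        + C ((ContinuousLinearMap.adjoint V (C ((Submodule.orthogonalProjectionOnto Mᗮ x : H))) : H))
        + S (Submodule.orthogonalProjectionOnto Mᗮ x) := by
      intro x
      have hx : ((Submodule.orthogonalProjectionOnto M x : H)) + (Submodule.orthogonalProjectionOnto Mᗮ x : H) = x :=
        M.starProjection_add_starProjection_orthogonal x
      rw [hS]
      conv_lhs => rw [← hx]
      rw [map_add, hext (Submodule.orthogonalProjectionOnto M x)]
      abel
    have hmem : ∀ f : Mᗮ, C (S f) ∈ Mᗮ := by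
      intro f
      rw [Submodule.mem_orthogonal]
      intro u hu
      lift u to M using hu with m
      have h0 : ⟪C (m : H), S f⟫ = 0 := by
        rw [hS, inner_sub_right]
        have t1 : ⟪C (m : H), W (f : H)⟫ = ⟪C (f : H), V m⟫ := by
          rw [hsymm (f : H) (m : H), hext m]
        have t2 : ⟪C (m : H), C ((ContinuousLinearMap.adjoint V (C (f : H)) : H))⟫
            = ⟪C (f : H), V m⟫ := by
          rw [conj_inner_conj hC, ← Submodule.coe_inner,
            ContinuousLinearMap.adjoint_inner_left]
        rw [t1, t2, sub_self]
      rw [← inner_conj_symm, conj_swap hC, h0, map_zero]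
    have hSsymm : ∀ f g : Mᗮ, ⟪C (g : H), S f⟫ = ⟪C (S g), (f : H)⟫ := by
      have aux : ∀ f g : Mᗮ, ⟪C (g : H), S f⟫ = ⟪C (g : H), W (f : H)⟫ := by
        intro f g
        rw [hS, inner_sub_right, conj_inner_conj hC]
        have hz : ⟪((ContinuousLinearMap.adjoint V (C (f : H)) : H)), (g : H)⟫ = 0 :=
          Submodule.inner_right_of_mem_orthogonal
            (ContinuousLinearMap.adjoint V (C (f : H))).2 g.2
        rw [hz, sub_zero]
      intro f g
      rw [aux f g, hsymm (f : H) (g : H), ← aux g f, conj_swap hC]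
    refine ⟨S, ⟨fun f => ⟨C (S f), hmem f, hCC (S f)⟩, hSsymm, hform⟩, ?_⟩
    intro S' hS'
    ext f
    have h1 := hS'.2.2 (f : H)
    have h2 := hform (f : H)
    have hp : Submodule.orthogonalProjectionOnto M (f : H) = 0 :=
      Submodule.orthogonalProjectionOnto_apply_of_mem_orthogonal f.2
    have hq : Submodule.orthogonalProjectionOnto Mᗮ (f : H) = f :=
      Submodule.orthogonalProjectionOnto_mem_subspace_eq_self f
    rw [hp, hq] at h1 h2
    simp only [map_zero, zero_add] at h1 h2
    exact add_left_cancel (h1.symm.trans h2)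
end

section
/- Let C be a conjugation on H, M a closed proper subspace of H, and V : M → H a bounded C-symmetric operator. Let L̃ : M⊥ → H be a bounded operator and define the bounded extension Ṽ of V by Ṽ x = V(P_M x) + L̃(P⊥ x). Then Ṽ is C-self-adjoint if and only if the following two conditions hold: (i) L̃*(C h) = P⊥(C(V h)) for all h ∈ M, and (ii) P⊥(C(L̃ f)) = L̃*(C f) for all f ∈ M⊥. Here L̃* : H → M⊥ is the Hilbert-space adjoint of L̃ and its values are regarded as elements of H. -/
local notation "⟪" x ", " y "⟫" => @inner ℂ _ _ x y

/-- A conjugation is antiunitary: `⟪C x, C y⟫ = ⟪y, x⟫`. -/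
theorem conj_inner' {H : Type*} [NormedAddCommGroup H] [InnerProductSpace ℂ H]
    (C : H → H)
    (hadd : ∀ x y, C (x + y) = C x + C y)
    (hsmul : ∀ (a : ℂ) (x : H), C (a • x) = (starRingEnd ℂ) a • C x)
    (hnorm : ∀ x, ‖C x‖ = ‖x‖) (x y : H) :
    ⟪C x, C y⟫ = ⟪y, x⟫ := by
  have hsub : ∀ a b, C (a - b) = C a - C b := by
    intro a b
    have : C ((-1 : ℂ) • b) = -C b := by
      rw [hsmul]; simp
    rw [sub_eq_add_neg, ← neg_one_smul ℂ b, hadd, this, ← sub_eq_add_neg]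
  have h1 : ‖C x + C y‖ = ‖x + y‖ := by rw [← hadd, hnorm]
  have h2 : ‖C x - C y‖ = ‖x - y‖ := by rw [← hsub, hnorm]
  have h3 : ‖C x - Complex.I • C y‖ = ‖x + Complex.I • y‖ := by
    have : C (x + Complex.I • y) = C x - Complex.I • C y := by
      rw [hadd, hsmul]; simp [Complex.conj_I, sub_eq_add_neg]
    rw [← this, hnorm]
  have h4 : ‖C x + Complex.I • C y‖ = ‖x - Complex.I • y‖ := by
    have : C (x - Complex.I • y) = C x + Complex.I • C y := by
      rw [hsub, hsmul]; simp [Complex.conj_I, sub_eq_add_neg]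
    rw [← this, hnorm]
  have h5 : ‖y - Complex.I • x‖ = ‖x + Complex.I • y‖ := by
    have e : Complex.I • (y - Complex.I • x) = x + Complex.I • y := by
      rw [smul_sub, smul_smul, Complex.I_mul_I, neg_one_smul, sub_neg_eq_add, add_comm]
    calc ‖y - Complex.I • x‖ = ‖Complex.I • (y - Complex.I • x)‖ := by
          rw [norm_smul]; simp
      _ = ‖x + Complex.I • y‖ := by rw [e]
  have h6 : ‖y + Complex.I • x‖ = ‖x - Complex.I • y‖ := by
    have e : Complex.I • (x - Complex.I • y) = y + Complex.I • x := by
      rw [smul_sub, smul_smul, Complex.I_mul_I, neg_one_smul, sub_neg_eq_add, add_comm]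
    calc ‖y + Complex.I • x‖ = ‖Complex.I • (x - Complex.I • y)‖ := by rw [e]
      _ = ‖x - Complex.I • y‖ := by rw [norm_smul]; simp
  rw [inner_eq_sum_norm_sq_div_four, inner_eq_sum_norm_sq_div_four]
  simp only [RCLike.I_to_complex]
  rw [h1, h2, h3, h4, h5, h6, add_comm y x, norm_sub_rev y x]

/-- the bounded extension `Ṽ x = V(P_M x) + L̃(P⊥ x)` of a `C`-symmetric
operator `V` is `C`-self-adjoint iff `L̃*(C h) = P⊥(C(V h))` for `h ∈ M` and
`P⊥(C(L̃ f)) = L̃*(C f)` for `f ∈ M⊥`. -/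
theorem stmt_3 {H : Type*} [NormedAddCommGroup H] [InnerProductSpace ℂ H] [CompleteSpace H]
    (C : H → H) (hC : IsConjugation C)
    (M : Submodule ℂ H) [CompleteSpace M] (hproper : M ≠ ⊤)
    (V : M →L[ℂ] H)
    (hV : ∀ x y : M, ⟪C (y : H), V x⟫ = ⟪C (V y), (x : H)⟫)
    (L : Mᗮ →L[ℂ] H) (W : H →L[ℂ] H)
    (hW : ∀ x, W x = V (Submodule.orthogonalProjection M x) + L (Submodule.orthogonalProjection Mᗮ x)) :
    (∀ x, W x = C (ContinuousLinearMap.adjoint W (C x))) ↔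
      ((∀ h : M, ((ContinuousLinearMap.adjoint L (C (h : H)) : H))
          = ((Submodule.orthogonalProjection Mᗮ (C (V h)) : H))) ∧
       (∀ f : Mᗮ, ((Submodule.orthogonalProjection Mᗮ (C (L f)) : H))
          = ((ContinuousLinearMap.adjoint L (C (f : H)) : H)))) := by
  obtain ⟨hadd, hsmul, hnorm, hinv⟩ := hC
  have key : ∀ x y : H, ⟪C x, C y⟫ = ⟪y, x⟫ := conj_inner' C hadd hsmul hnorm
  have flip : ∀ x y : H, ⟪C x, y⟫ = ⟪C y, x⟫ := by
    intro x y
    calc ⟪C x, y⟫ = ⟪C x, C (C y)⟫ := by rw [hinv]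
      _ = ⟪C y, x⟫ := key x (C y)
  -- projection facts
  have hPM : ∀ h : M, Submodule.orthogonalProjection M (h : H) = h :=
    fun h => Submodule.orthogonalProjectionOnto_mem_subspace_eq_self h
  have hPMp0 : ∀ h : M, Submodule.orthogonalProjection Mᗮ (h : H) = 0 := fun h =>
    Submodule.orthogonalProjectionOnto_orthogonal_apply_eq_zero h.2
  have hQM0 : ∀ f : Mᗮ, Submodule.orthogonalProjection M (f : H) = 0 := fun f =>
    Submodule.orthogonalProjectionOnto_apply_of_mem_orthogonal f.2
  have hQMp : ∀ f : Mᗮ, Submodule.orthogonalProjection Mᗮ (f : H) = f :=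
    fun f => Submodule.orthogonalProjectionOnto_mem_subspace_eq_self f
  have hWM : ∀ h : M, W (h : H) = V h := by
    intro h; rw [hW, hPM, hPMp0]; simp
  have hWMp : ∀ f : Mᗮ, W (f : H) = L f := by
    intro f; rw [hW, hQM0, hQMp]; simp
  -- C-symmetry of V, symmetric form
  have hVsym : ∀ x y : M, ⟪C (y : H), V x⟫ = ⟪C (x : H), V y⟫ := by
    intro x y; rw [hV, flip]
  -- reusable computations
  have eAdj : ∀ (g : Mᗮ) (z : H),
      ⟪(g : H), ((ContinuousLinearMap.adjoint L z : Mᗮ) : H)⟫ = (starRingEnd ℂ) ⟪z, L g⟫ := by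
    intro g z
    have h1 := ContinuousLinearMap.adjoint_inner_right L g z
    have h2 : ⟪(g : H), ((ContinuousLinearMap.adjoint L z : Mᗮ) : H)⟫ = ⟪L g, z⟫ := h1
    rw [h2, ← inner_conj_symm]
  have eProj : ∀ (g : Mᗮ) (z : H),
      ⟪(g : H), ((Submodule.orthogonalProjection Mᗮ z : Mᗮ) : H)⟫ = (starRingEnd ℂ) ⟪C (g : H), C z⟫ := by
    intro g z
    have h1 := Submodule.inner_orthogonalProjectionOnto_eq_of_mem_left (K := Mᗮ) g z
    have h2 : ⟪(g : H), ((Submodule.orthogonalProjection Mᗮ z : Mᗮ) : H)⟫ = ⟪(g : H), z⟫ := h1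
    rw [h2, ← inner_conj_symm, ← key]
  -- condition 1 in inner-product form
  have hc1 : (∀ h : M, ((ContinuousLinearMap.adjoint L (C (h : H)) : H))
          = ((Submodule.orthogonalProjection Mᗮ (C (V h)) : H))) ↔
      ∀ (h : M) (f : Mᗮ), ⟪C (f : H), V h⟫ = ⟪C (h : H), L f⟫ := by
    have step : ∀ (h : M) (f : Mᗮ),
        (⟪(f : H), ((ContinuousLinearMap.adjoint L (C (h : H)) : Mᗮ) : H)⟫ =
          ⟪(f : H), ((Submodule.orthogonalProjection Mᗮ (C (V h)) : Mᗮ) : H)⟫) ↔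
        (⟪C (f : H), V h⟫ = ⟪C (h : H), L f⟫) := by
      intro h f
      rw [eAdj f (C (h : H)), eProj f (C (V h)), hinv]
      constructor
      · intro hh
        have := congrArg (starRingEnd ℂ) hh
        simpa only [Complex.conj_conj] using this.symm
      · intro hh
        rw [hh]
    constructor
    · intro hc h f
      exact (step h f).mp (by rw [hc h])
    · intro hc h
      have : (ContinuousLinearMap.adjoint L (C (h : H)) : Mᗮ)
          = Submodule.orthogonalProjection Mᗮ (C (V h)) := by
        apply ext_inner_left ℂ
        intro v
        rw [Submodule.coe_inner, Submodule.coe_inner]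
        exact (step h v).mpr (hc h v)
      rw [this]
  -- condition 2 in inner-product form
  have hc2 : (∀ f : Mᗮ, ((Submodule.orthogonalProjection Mᗮ (C (L f)) : H))
          = ((ContinuousLinearMap.adjoint L (C (f : H)) : H))) ↔
      ∀ (f g : Mᗮ), ⟪C (g : H), L f⟫ = ⟪C (f : H), L g⟫ := by
    have step : ∀ (f g : Mᗮ),
        (⟪(g : H), ((Submodule.orthogonalProjection Mᗮ (C (L f)) : Mᗮ) : H)⟫ =
          ⟪(g : H), ((ContinuousLinearMap.adjoint L (C (f : H)) : Mᗮ) : H)⟫) ↔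
        (⟪C (g : H), L f⟫ = ⟪C (f : H), L g⟫) := by
      intro f g
      rw [eAdj g (C (f : H)), eProj g (C (L f)), hinv]
      constructor
      · intro hh
        have := congrArg (starRingEnd ℂ) hh
        simpa only [Complex.conj_conj] using this
      · intro hh
        rw [hh]
    constructor
    · intro hc f g
      exact (step f g).mp (by rw [hc f])
    · intro hc f
      have : (Submodule.orthogonalProjection Mᗮ (C (L f)) : Mᗮ)
          = ContinuousLinearMap.adjoint L (C (f : H)) := by
        apply ext_inner_left ℂ
        intro v
        rw [Submodule.coe_inner, Submodule.coe_inner]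
        exact (step f v).mpr (hc f v)
      rw [this]
  -- symmetric reformulation of C-self-adjointness
  have hsym : (∀ x, W x = C (ContinuousLinearMap.adjoint W (C x))) ↔
      ∀ x y, ⟪C y, W x⟫ = ⟪C x, W y⟫ := by
    constructor
    · intro h x y
      rw [h x, key, ContinuousLinearMap.adjoint_inner_left]
    · intro h x
      have : C (W x) = ContinuousLinearMap.adjoint W (C x) := by
        apply ext_inner_left ℂ
        intro v
        calc ⟪v, C (W x)⟫ = (starRingEnd ℂ) ⟪C (W x), v⟫ := (inner_conj_symm _ _).symm
          _ = (starRingEnd ℂ) ⟪C v, W x⟫ := by rw [flip]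
          _ = (starRingEnd ℂ) ⟪C x, W v⟫ := by rw [h]
          _ = ⟪W v, C x⟫ := inner_conj_symm _ _
          _ = ⟪v, ContinuousLinearMap.adjoint W (C x)⟫ :=
            (ContinuousLinearMap.adjoint_inner_right _ _ _).symm
      rw [← this, hinv]
  rw [hsym, hc1, hc2]
  constructor
  · intro h
    constructor
    · intro hh f
      have := h (hh : H) (f : H)
      rwa [hWM, hWMp] at this
    · intro f g
      have := h (f : H) (g : H)
      rwa [hWMp, hWMp] at this
  · rintro ⟨h1, h2⟩ x y
    have hCy : C y = C ((Submodule.orthogonalProjection M y : H)) + C ((Submodule.orthogonalProjection Mᗮ y : H)) := by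
      rw [← hadd]; exact congrArg C (M.starProjection_add_starProjection_orthogonal y).symm
    have hCx : C x = C ((Submodule.orthogonalProjection M x : H)) + C ((Submodule.orthogonalProjection Mᗮ x : H)) := by
      rw [← hadd]; exact congrArg C (M.starProjection_add_starProjection_orthogonal x).symm
    rw [hW x, hW y, hCy, hCx]
    simp only [inner_add_left, inner_add_right]
    rw [hVsym (Submodule.orthogonalProjection M x) (Submodule.orthogonalProjection M y),
        ← h1 (Submodule.orthogonalProjection M y) (Submodule.orthogonalProjection Mᗮ x),
        h1 (Submodule.orthogonalProjection M x) (Submodule.orthogonalProjection Mᗮ y),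
        h2 (Submodule.orthogonalProjection Mᗮ x) (Submodule.orthogonalProjection Mᗮ y)]
    ring
end

section
/- Let C be a conjugation on H, M a closed subspace of H whose orthogonal complement M⊥ is one-dimensional, and V : M → H a bounded C-symmetric operator. If L̃ : M⊥ → H is a bounded operator satisfying L̃*(C h) = P⊥(C(V h)) for all h ∈ M (i.e. L̃* extends the operator Z₀ : C h ↦ P⊥(C(V h))), then the operator Ṽ defined by Ṽ x = V(P_M x) + L̃(P⊥ x) is a bounded C-self-adjoint extension of V. -/
local notation "⟪" x ", " y "⟫" => @inner ℂ _ _ x y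

lemma conj_inner_key {H : Type*} [NormedAddCommGroup H] [InnerProductSpace ℂ H]
    (C : H → H) (hC : IsConjugation C) (u v : H) : ⟪C u, C v⟫ = ⟪v, u⟫ := by
  obtain ⟨hadd, hsmul, hnorm, hinv⟩ := hC
  have hneg : ∀ x : H, C (-x) = -C x := by
    intro x
    have := hsmul (-1) x
    simpa using this
  have hsub : ∀ x y : H, C (x - y) = C x - C y := by
    intro x y
    rw [sub_eq_add_neg, hadd, hneg, sub_eq_add_neg]
  have hI : ∀ x : H, C (Complex.I • x) = -(Complex.I • C x) := by
    intro x
    rw [hsmul]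
    simp [Complex.conj_I]
  have e1 : ‖C u + C v‖ = ‖u + v‖ := by rw [← hadd, hnorm]
  have e2 : ‖C u - C v‖ = ‖u - v‖ := by rw [← hsub, hnorm]
  have e3 : ‖C u - Complex.I • C v‖ = ‖u + Complex.I • v‖ := by
    have : C u - Complex.I • C v = C (u + Complex.I • v) := by
      rw [hadd, hI, sub_eq_add_neg]
    rw [this, hnorm]
  have e4 : ‖C u + Complex.I • C v‖ = ‖u - Complex.I • v‖ := by
    have : C u + Complex.I • C v = C (u - Complex.I • v) := by
      rw [hsub, hI, sub_neg_eq_add]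
    rw [this, hnorm]
  have f3 : ‖v - Complex.I • u‖ = ‖u + Complex.I • v‖ := by
    have : v - Complex.I • u = (-Complex.I) • (u + Complex.I • v) := by
      rw [smul_add, smul_smul]
      simp [sub_eq_add_neg, add_comm, neg_smul]
    rw [this, norm_smul]
    simp
  have f4 : ‖v + Complex.I • u‖ = ‖u - Complex.I • v‖ := by
    have : v + Complex.I • u = Complex.I • (u - Complex.I • v) := by
      rw [smul_sub, smul_smul]
      simp [add_comm]
    rw [this, norm_smul]
    simp
  rw [inner_eq_sum_norm_sq_div_four, inner_eq_sum_norm_sq_div_four]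
  have hIK : (RCLike.I : ℂ) = Complex.I := rfl
  rw [hIK, e1, e2, e3, e4, f3, f4, add_comm v u, norm_sub_rev v u]

/-- if `M⊥` is one-dimensional and `L̃* ⊇ Z₀` (i.e. `L̃*(C h) = P⊥(C(V h))`
for all `h ∈ M`), then `Ṽ x = V(P_M x) + L̃(P⊥ x)` is a bounded `C`-self-adjoint
extension of `V`. -/
theorem stmt_4 {H : Type*} [NormedAddCommGroup H] [InnerProductSpace ℂ H] [CompleteSpace H]
    (C : H → H) (hC : IsConjugation C)
    (M : Submodule ℂ H) [CompleteSpace M]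
    (hdim : Module.finrank ℂ (Mᗮ : Submodule ℂ H) = 1)
    (V : M →L[ℂ] H)
    (hV : ∀ x y : M, ⟪C (y : H), V x⟫ = ⟪C (V y), (x : H)⟫)
    (L : Mᗮ →L[ℂ] H)
    (hL : ∀ h : M, ((ContinuousLinearMap.adjoint L (C (h : H)) : H))
        = ((Submodule.orthogonalProjectionOnto Mᗮ (C (V h)) : H)))
    (W : H →L[ℂ] H)
    (hW : ∀ x, W x = V (Submodule.orthogonalProjectionOnto M x) + L (Submodule.orthogonalProjectionOnto Mᗮ x)) :
    (∀ h : M, W h = V h) ∧ (∀ x, W x = C (ContinuousLinearMap.adjoint W (C x))) := by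
  have key := conj_inner_key C hC
  obtain ⟨hadd, hsmul, hnorm, hinv⟩ := hC
  -- symmetric form of hV
  have hVV : ∀ a b : M, ⟪V a, C (b : H)⟫ = ⟪V b, C (a : H)⟫ := by
    intro a b
    have h1 := hV a b
    have h2 : ⟪C (V b), (a : H)⟫ = ⟪C (a : H), V b⟫ := by
      conv_lhs => rw [← hinv (a : H)]
      exact key (V b) (C (a : H))
    have h3 : ⟪C (b : H), V a⟫ = ⟪C (a : H), V b⟫ := h1.trans h2
    rw [← inner_conj_symm, h3, inner_conj_symm]
  have hVL : ∀ (a : M) (b : Mᗮ), ⟪V a, C (b : H)⟫ = ⟪L b, C (a : H)⟫ := by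
    intro a b
    have h1 : ⟪C (a : H), L b⟫ = ⟪C (b : H), V a⟫ := by
      rw [← ContinuousLinearMap.adjoint_inner_left]
      rw [Submodule.coe_inner, hL a]
      rw [← Submodule.coe_inner, Submodule.inner_orthogonalProjectionOnto_eq_of_mem_right]
      conv_lhs => rw [← hinv (b : H)]
      exact key (V a) (C (b : H))
    rw [← inner_conj_symm, ← h1, inner_conj_symm]
  have hLL : ∀ b b' : Mᗮ, ⟪L b, C (b' : H)⟫ = ⟪L b', C (b : H)⟫ := by
    obtain ⟨e, he, hsp⟩ := finrank_eq_one_iff'.mp hdim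
    intro b b'
    obtain ⟨a, ha⟩ := hsp b
    obtain ⟨a', ha'⟩ := hsp b'
    rw [← ha, ← ha', map_smul, map_smul]
    have hc : ((a • e : Mᗮ) : H) = a • (e : H) := rfl
    have hc' : ((a' • e : Mᗮ) : H) = a' • (e : H) := rfl
    rw [hc, hc', hsmul, hsmul, inner_smul_left, inner_smul_left,
      inner_smul_right, inner_smul_right]
    ring
  -- the main symmetry
  have S : ∀ x y : H, ⟪W x, C y⟫ = ⟪W y, C x⟫ := by
    have Hmn : ∀ (m m' : M) (n n' : Mᗮ),
        ⟪V m + L n, C ((m' : H) + (n' : H))⟫ = ⟪V m' + L n', C ((m : H) + (n : H))⟫ := by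
      intro m m' n n'
      rw [hadd, hadd, inner_add_left, inner_add_left, inner_add_right, inner_add_right,
        inner_add_right, inner_add_right]
      rw [hVV m m', hVL m n', ← hVL m' n, hLL n n']
      ring
    intro x y
    rw [hW x, hW y]
    have hx : ((Submodule.orthogonalProjectionOnto M x : H) + (Submodule.orthogonalProjectionOnto Mᗮ x : H)) = x := M.starProjection_add_starProjection_orthogonal x
    have hy : ((Submodule.orthogonalProjectionOnto M y : H) + (Submodule.orthogonalProjectionOnto Mᗮ y : H)) = y := M.starProjection_add_starProjection_orthogonal y
    conv_lhs => rw [← hy]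
    conv_rhs => rw [← hx]
    exact Hmn (Submodule.orthogonalProjectionOnto M x) (Submodule.orthogonalProjectionOnto M y)
      (Submodule.orthogonalProjectionOnto Mᗮ x) (Submodule.orthogonalProjectionOnto Mᗮ y)
  constructor
  · intro h
    rw [hW]
    rw [Submodule.orthogonalProjectionOnto_mem_subspace_eq_self h,
      Submodule.orthogonalProjectionOnto_apply_of_mem_orthogonal (M.le_orthogonal_orthogonal h.2)]
    simp
  · intro x
    have hadj : C (W x) = ContinuousLinearMap.adjoint W (C x) := by
      apply ext_inner_left ℂ
      intro v
      rw [ContinuousLinearMap.adjoint_inner_right]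
      conv_lhs => rw [← hinv v]
      rw [key (C v) (W x)]
      exact S x v
    rw [← hadj, hinv]
end

section
/- Let C be a conjugation on H, M a closed proper subspace of H, and V : M → H a bounded C-symmetric operator. If T̃ is any bounded C-self-adjoint extension of V on H, then there exists a bounded operator Z̃ : H → M⊥ satisfying Z̃(C h) = P⊥(C(V h)) for all h ∈ M (i.e. Z̃ extends the operator Z₀ : C h ↦ P⊥(C(V h)) defined on C(M)) such that T̃ x = (1/2)(Ṽ_{Z̃} x + C(Ṽ_{Z̃}*(C x))) for all x ∈ H, where Ṽ_{Z̃} is the bounded operator defined by Ṽ_{Z̃} x = V(P_M x) + Z̃*(P⊥ x). -/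
local notation "⟪" x ", " y "⟫" => @inner ℂ _ _ x y

/-- every bounded `C`-self-adjoint extension `T̃` of a `C`-symmetric bounded
operator `V` arises as `T̃ = (Ṽ_{Z̃} + C Ṽ_{Z̃}* C)/2`, where `Z̃ : H → M⊥` is a bounded
extension of `Z₀ : C h ↦ P⊥(C(V h))` and `Ṽ_{Z̃} = V P_M + Z̃* P⊥`. -/
theorem stmt_5 {H : Type*} [NormedAddCommGroup H] [InnerProductSpace ℂ H] [CompleteSpace H]
    (C : H → H) (hC : IsConjugation C)
    (M : Submodule ℂ H) [CompleteSpace M] (hproper : M ≠ ⊤)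
    (V : M →L[ℂ] H)
    (hV : ∀ x y : M, ⟪C (y : H), V x⟫ = ⟪C (V y), (x : H)⟫)
    (T : H →L[ℂ] H)
    (hext : ∀ h : M, T h = V h)
    (hsa : ∀ x, T x = C (ContinuousLinearMap.adjoint T (C x))) :
    ∃ Z : H →L[ℂ] Mᗮ,
      (∀ h : M, Z (C (h : H)) = Submodule.orthogonalProjectionOnto Mᗮ (C (V h))) ∧
      (∀ x, T x = (2⁻¹ : ℂ) •
        ((V ∘L Submodule.orthogonalProjectionOnto M
            + ContinuousLinearMap.adjoint Z ∘L Submodule.orthogonalProjectionOnto Mᗮ) x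
          + C (ContinuousLinearMap.adjoint
              (V ∘L Submodule.orthogonalProjectionOnto M
                + ContinuousLinearMap.adjoint Z ∘L Submodule.orthogonalProjectionOnto Mᗮ) (C x)))) := by
  obtain ⟨hadd, hsmul, hnorm, hinv⟩ := hC
  set Z : H →L[ℂ] Mᗮ :=
    Submodule.orthogonalProjectionOnto Mᗮ ∘L ContinuousLinearMap.adjoint T with hZ
  have hCT : ∀ x, C (T x) = ContinuousLinearMap.adjoint T (C x) := by
    intro x; rw [hsa x, hinv]
  have hVeq : (V ∘L Submodule.orthogonalProjectionOnto M
      + ContinuousLinearMap.adjoint Z ∘L Submodule.orthogonalProjectionOnto Mᗮ) = T := by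
    have hadj : ContinuousLinearMap.adjoint Z = T ∘L Mᗮ.subtypeL := by
      rw [hZ, ContinuousLinearMap.adjoint_comp, ContinuousLinearMap.adjoint_adjoint,
        Submodule.adjoint_orthogonalProjectionOnto]
    ext x
    simp only [ContinuousLinearMap.add_apply, ContinuousLinearMap.comp_apply, hadj]
    rw [← hext, Submodule.subtypeL_apply, ← map_add]
    exact congrArg T (M.starProjection_add_starProjection_orthogonal x)
  refine ⟨Z, ?_, ?_⟩
  · intro h
    have : Z (C (h : H)) = Submodule.orthogonalProjectionOnto Mᗮ (C (T h)) := by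
      simp [hZ, ContinuousLinearMap.comp_apply, hCT]
    rw [this, hext]
  · intro x
    rw [hVeq, ← hsa x, ← two_smul ℂ, smul_smul]
    norm_num
end

section
/- Let C be a conjugation on H, M a closed proper subspace of H, and V : M → H a bounded C-symmetric operator. For every bounded operator Z̃ : H → M⊥ satisfying Z̃(C h) = P⊥(C(V h)) for all h ∈ M, the operator T̃_{Z̃} defined by T̃_{Z̃} x = (1/2)(Ṽ_{Z̃} x + C(Ṽ_{Z̃}*(C x))), where Ṽ_{Z̃} x = V(P_M x) + Z̃*(P⊥ x), is a bounded C-self-adjoint extension of V on H. -/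
local notation "⟪" x ", " y "⟫" => @inner ℂ _ _ x y

section Aux

variable {H : Type*} [NormedAddCommGroup H] [InnerProductSpace ℂ H]

/-- The conjugate `C A C` of a continuous linear map, which is again linear. -/
noncomputable def conjOp (C : H → H) (hC : IsConjugation C) (A : H →L[ℂ] H) : H →L[ℂ] H :=
  LinearMap.mkContinuous
    { toFun := fun x => C (A (C x))
      map_add' := fun x y => by
        show C (A (C (x + y))) = C (A (C x)) + C (A (C y))
        rw [hC.1, map_add, hC.1]
      map_smul' := fun a x => by
        show C (A (C (a • x))) = a • C (A (C x))
        rw [hC.2.1, map_smul, hC.2.1, Complex.conj_conj] }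
    ‖A‖ (fun x => by
      simp only [LinearMap.coe_mk, AddHom.coe_mk]
      rw [hC.2.2.1]
      calc ‖A (C x)‖ ≤ ‖A‖ * ‖C x‖ := A.le_opNorm _
        _ = ‖A‖ * ‖x‖ := by rw [hC.2.2.1])

@[simp] lemma conjOp_apply (C : H → H) (hC : IsConjugation C) (A : H →L[ℂ] H) (x : H) :
    conjOp C hC A x = C (A (C x)) := rfl

lemma conjOp_adjoint [CompleteSpace H] (C : H → H) (hC : IsConjugation C) (A : H →L[ℂ] H) :
    ContinuousLinearMap.adjoint (conjOp C hC A)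
      = conjOp C hC (ContinuousLinearMap.adjoint A) := by
  ext u
  apply ext_inner_right ℂ
  intro v
  rw [ContinuousLinearMap.adjoint_inner_left, conjOp_apply, conjOp_apply]
  calc ⟪u, C (A (C v))⟫ = ⟪C (C u), C (A (C v))⟫ := by rw [hC.2.2.2]
    _ = ⟪A (C v), C u⟫ := hC.inner_conj _ _
    _ = ⟪C v, ContinuousLinearMap.adjoint A (C u)⟫ := by
        rw [ContinuousLinearMap.adjoint_inner_right]
    _ = ⟪C v, C (C (ContinuousLinearMap.adjoint A (C u)))⟫ := by rw [hC.2.2.2]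
    _ = ⟪C (ContinuousLinearMap.adjoint A (C u)), v⟫ := hC.inner_conj _ _

end Aux

/-- for every bounded `Z̃ : H → M⊥` extending `Z₀ : C h ↦ P⊥(C(V h))`, the
operator `T̃_{Z̃} = (Ṽ_{Z̃} + C Ṽ_{Z̃}* C)/2`, where `Ṽ_{Z̃} = V P_M + Z̃* P⊥`, is a bounded
`C`-self-adjoint extension of `V`. -/
theorem stmt_6 {H : Type*} [NormedAddCommGroup H] [InnerProductSpace ℂ H] [CompleteSpace H]
    (C : H → H) (hC : IsConjugation C)
    (M : Submodule ℂ H) [CompleteSpace M] (hproper : M ≠ ⊤)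
    (V : M →L[ℂ] H)
    (hV : ∀ x y : M, ⟪C (y : H), V x⟫ = ⟪C (V y), (x : H)⟫)
    (Z : H →L[ℂ] Mᗮ)
    (hZ : ∀ h : M, Z (C (h : H)) = Submodule.orthogonalProjectionOnto Mᗮ (C (V h))) :
    ∃ T : H →L[ℂ] H,
      (∀ x, T x = (2⁻¹ : ℂ) •
        ((V ∘L Submodule.orthogonalProjectionOnto M
            + ContinuousLinearMap.adjoint Z ∘L Submodule.orthogonalProjectionOnto Mᗮ) x
          + C (ContinuousLinearMap.adjoint
              (V ∘L Submodule.orthogonalProjectionOnto M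
                + ContinuousLinearMap.adjoint Z ∘L Submodule.orthogonalProjectionOnto Mᗮ) (C x)))) ∧
      (∀ h : M, T h = V h) ∧
      (∀ x, T x = C (ContinuousLinearMap.adjoint T (C x))) := by
  set Vt : H →L[ℂ] H :=
    V ∘L Submodule.orthogonalProjectionOnto M
      + ContinuousLinearMap.adjoint Z ∘L Submodule.orthogonalProjectionOnto Mᗮ with hVt
  refine ⟨(2⁻¹ : ℂ) • (Vt + conjOp C hC (ContinuousLinearMap.adjoint Vt)), ?_, ?_, ?_⟩
  · intro x; rfl
  · -- extension property
    intro h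
    have hPM : Submodule.orthogonalProjectionOnto M (h : H) = h :=
      Submodule.orthogonalProjectionOnto_mem_subspace_eq_self h
    have hPMo : Submodule.orthogonalProjectionOnto Mᗮ (h : H) = 0 :=
      Submodule.orthogonalProjectionOnto_apply_of_mem_orthogonal
        (Submodule.le_orthogonal_orthogonal M h.2)
    have hVth : Vt (h : H) = V h := by
      simp [hVt, hPM, hPMo]
    have hadj : ContinuousLinearMap.adjoint Vt (C (h : H)) = C (V h) := by
      apply ext_inner_right ℂ
      intro y
      rw [ContinuousLinearMap.adjoint_inner_left]
      have hexp : Vt y = V (Submodule.orthogonalProjectionOnto M y)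
          + ContinuousLinearMap.adjoint Z (Submodule.orthogonalProjectionOnto Mᗮ y) := rfl
      rw [hexp, inner_add_right]
      have t1 : ⟪C (h : H), V (Submodule.orthogonalProjectionOnto M y)⟫
          = ⟪(Submodule.orthogonalProjectionOnto M (C (V h)) : H), y⟫ := by
        rw [hV (Submodule.orthogonalProjectionOnto M y) h, ← Submodule.starProjection_apply,
          ← Submodule.starProjection_apply, Submodule.inner_starProjection_left_eq_right]
      have t2 : ⟪C (h : H), ContinuousLinearMap.adjoint Z (Submodule.orthogonalProjectionOnto Mᗮ y)⟫
          = ⟪(Submodule.orthogonalProjectionOnto Mᗮ (C (V h)) : H), y⟫ := by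
        rw [ContinuousLinearMap.adjoint_inner_right, hZ h, Submodule.coe_inner]
        exact Submodule.inner_orthogonalProjectionOnto_eq_of_mem_left (K := Mᗮ) _ _
      rw [t1, t2, ← inner_add_left,
        ← Submodule.starProjection_apply, ← Submodule.starProjection_apply,
        Submodule.starProjection_add_starProjection_orthogonal (K := M) (C (V h))]
    have : C (ContinuousLinearMap.adjoint Vt (C (h : H))) = V h := by
      rw [hadj, hC.2.2.2]
    simp only [ContinuousLinearMap.smul_apply, ContinuousLinearMap.add_apply,
      conjOp_apply, hVth, this]
    rw [← two_smul ℂ (V h), smul_smul]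
    norm_num
  · -- C-self-adjointness
    intro x
    have hTadj : ContinuousLinearMap.adjoint
        ((2⁻¹ : ℂ) • (Vt + conjOp C hC (ContinuousLinearMap.adjoint Vt)))
        = (2⁻¹ : ℂ) • (ContinuousLinearMap.adjoint Vt + conjOp C hC Vt) := by
      rw [map_smulₛₗ, map_add, conjOp_adjoint, ContinuousLinearMap.adjoint_adjoint,
        map_inv₀, map_ofNat]
    rw [hTadj]
    simp only [ContinuousLinearMap.smul_apply, ContinuousLinearMap.add_apply, conjOp_apply,
      hC.2.2.2]
    rw [hC.2.1, hC.1, hC.2.2.2, map_inv₀, map_ofNat, add_comm (Vt x)]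
end

section
/- (Crandall) Let M be a closed proper subspace of a complex Hilbert space H and let V : M → H be a contraction. Then the formula Ṽ_{K̃} x = V(P_M x) + D_{V*}(K̃(P⊥ x)) gives a bijective correspondence between the set of all contractions K̃ : M⊥ → H with range contained in 𝔇_{V*} and the set of all contractive extensions of V to all of H. In particular: for each such K̃ the operator Ṽ_{K̃} is a contraction on H extending V, every contraction on H extending V equals Ṽ_{K̃} for some such K̃, and K̃ is uniquely determined. -/
open ContinuousLinearMap in
/-- Douglas-type factorization: if `‖T y‖ ≤ ‖D y‖` for a self-adjoint `D`, then
`adjoint T = D ∘ K` for a contraction `K` with range in the closure of the range of `D`. -/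
theorem crandall_factor {H F : Type*} [NormedAddCommGroup H] [InnerProductSpace ℂ H]
    [CompleteSpace H] [NormedAddCommGroup F] [InnerProductSpace ℂ F] [CompleteSpace F]
    (D : H →L[ℂ] H) (hsa : ContinuousLinearMap.adjoint D = D)
    (T : H →L[ℂ] F) (hT : ∀ y, ‖T y‖ ≤ ‖D y‖) :
    ∃ K : F →L[ℂ] H, ‖K‖ ≤ 1 ∧ (∀ f, K f ∈ closure ((LinearMap.range (D : H →ₗ[ℂ] H) : Submodule ℂ H) : Set H))
      ∧ D ∘L K = ContinuousLinearMap.adjoint T := by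
  classical
  set Dl : H →ₗ[ℂ] H := (D : H →ₗ[ℂ] H) with hDl
  set R : Submodule ℂ H := LinearMap.range Dl with hRdef
  set C : Submodule ℂ H := R.topologicalClosure with hCdef
  have hRset : ((LinearMap.range (D : H →ₗ[ℂ] H) : Submodule ℂ H) : Set H) = (R : Set H) := by
    ext x; simp [hRdef, LinearMap.mem_range, hDl]
  -- kernel inclusion
  have hker : LinearMap.ker Dl ≤ LinearMap.ker (T : H →ₗ[ℂ] F) := by
    intro y hy
    have hy' : D y = 0 := hy
    have : ‖T y‖ ≤ ‖D y‖ := hT y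
    rw [hy'] at this
    simpa using norm_le_zero_iff.mp (by simpa using this)
  let e := Dl.quotKerEquivRange
  let Tbar : (H ⧸ LinearMap.ker Dl) →ₗ[ℂ] F := (LinearMap.ker Dl).liftQ (T : H →ₗ[ℂ] F) hker
  let L₀ : R →ₗ[ℂ] F := Tbar.comp e.symm.toLinearMap
  have key₀ : ∀ (y : H) (h : D y ∈ R), L₀ ⟨D y, h⟩ = T y := by
    intro y h
    have h' : Dl y ∈ LinearMap.range Dl := ⟨y, rfl⟩
    have hsymm : e.symm ⟨Dl y, h'⟩ = (LinearMap.ker Dl).mkQ y :=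
      Dl.quotKerEquivRange_symm_apply_image y h'
    show Tbar (e.symm ⟨D y, h⟩) = T y
    have : (⟨D y, h⟩ : R) = ⟨Dl y, h'⟩ := rfl
    rw [this, hsymm]
    rfl
  have bound₀ : ∀ c : R, ‖L₀ c‖ ≤ 1 * ‖c‖ := by
    intro c
    obtain ⟨y, hy⟩ := c.2
    have hmem : D y ∈ R := ⟨y, rfl⟩
    have hc : c = ⟨D y, hmem⟩ := Subtype.ext hy.symm
    rw [hc, key₀ y hmem]
    have hnorm : ‖(⟨D y, hmem⟩ : R)‖ = ‖D y‖ := rfl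
    rw [hnorm, one_mul]
    exact hT y
  let L₁ : R →L[ℂ] F := L₀.mkContinuous 1 bound₀
  have hL₁norm : ‖L₁‖ ≤ 1 := L₀.mkContinuous_norm_le zero_le_one bound₀
  -- inclusion of R into C
  have hisom : Isometry (Submodule.inclusion R.le_topologicalClosure : R → C) := fun x y => rfl
  let ι : R →L[ℂ] C := ⟨Submodule.inclusion R.le_topologicalClosure, hisom.continuous⟩
  have h_e : ∀ x : R, ‖x‖ ≤ (1 : NNReal) * ‖ι x‖ := fun x => by
    rw [NNReal.coe_one, one_mul]; rfl
  have hdense : DenseRange ι := by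
    intro c
    have hc : (c : H) ∈ closure (R : Set H) := by
      rw [← Submodule.topologicalClosure_coe]; exact c.2
    obtain ⟨u, hu, hlim⟩ := mem_closure_iff_seq_limit.1 hc
    refine mem_closure_iff_seq_limit.2 ⟨fun n => ι ⟨u n, hu n⟩, fun n => ⟨_, rfl⟩, ?_⟩
    rw [tendsto_subtype_rng]
    exact hlim
  let L₂ : C →L[ℂ] F :=
    L₁.extend ι
  have hL₂norm : ‖L₂‖ ≤ (1 : NNReal) * ‖L₁‖ := L₁.opNorm_extend_le hdense h_e
  have hL₂ : ‖L₂‖ ≤ 1 := by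
    refine hL₂norm.trans ?_
    rw [NNReal.coe_one, one_mul]
    exact hL₁norm
  let L : H →L[ℂ] F := L₂ ∘L (Submodule.orthogonalProjectionOnto C : H →L[ℂ] C)
  have hLD : ∀ y, L (D y) = T y := by
    intro y
    have hmem : D y ∈ R := ⟨y, rfl⟩
    have h1 : Submodule.orthogonalProjectionOnto C (D y) = (⟨D y, R.le_topologicalClosure hmem⟩ : C) :=
      Submodule.orthogonalProjectionOnto_mem_subspace_eq_self (⟨D y, R.le_topologicalClosure hmem⟩ : C)
    have h2 : (⟨D y, R.le_topologicalClosure hmem⟩ : C) = ι ⟨D y, hmem⟩ := rfl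
    calc L (D y) = L₂ (Submodule.orthogonalProjectionOnto C (D y)) := rfl
      _ = L₂ (ι ⟨D y, hmem⟩) := by rw [h1, h2]
      _ = L₁ ⟨D y, hmem⟩ := L₁.extend_eq hdense (isUniformEmbedding_of_bound _ h_e).isUniformInducing _
      _ = T y := key₀ y hmem
  refine ⟨ContinuousLinearMap.adjoint L, ?_, ?_, ?_⟩
  · calc ‖ContinuousLinearMap.adjoint L‖ = ‖L‖ := ContinuousLinearMap.adjoint.norm_map L
      _ ≤ ‖L₂‖ * ‖(Submodule.orthogonalProjectionOnto C : H →L[ℂ] C)‖ := ContinuousLinearMap.opNorm_comp_le _ _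
      _ ≤ 1 * 1 := mul_le_mul hL₂ (Submodule.orthogonalProjectionOnto_norm_le C) (ContinuousLinearMap.opNorm_nonneg _) zero_le_one
      _ = 1 := one_mul 1
  · intro f
    have hadj : ContinuousLinearMap.adjoint L
        = C.subtypeL ∘L ContinuousLinearMap.adjoint L₂ := by
      show ContinuousLinearMap.adjoint (L₂ ∘L (Submodule.orthogonalProjectionOnto C : H →L[ℂ] C)) = _
      rw [ContinuousLinearMap.adjoint_comp, Submodule.adjoint_orthogonalProjectionOnto]
    rw [hadj, hRset, ← Submodule.topologicalClosure_coe]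
    exact (ContinuousLinearMap.adjoint L₂ f).2
  · have hLDc : L ∘L D = T := ContinuousLinearMap.ext hLD
    calc D ∘L ContinuousLinearMap.adjoint L
        = ContinuousLinearMap.adjoint D ∘L ContinuousLinearMap.adjoint L := by rw [hsa]
      _ = ContinuousLinearMap.adjoint (L ∘L D) := (ContinuousLinearMap.adjoint_comp L D).symm
      _ = ContinuousLinearMap.adjoint T := by rw [hLDc]
section Main

variable {H : Type*} [NormedAddCommGroup H] [InnerProductSpace ℂ H] [CompleteSpace H]

private theorem crandall_Dsq (M : Submodule ℂ H) [CompleteSpace M]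
    (V : M →L[ℂ] H) (D : H →L[ℂ] H) (hsa : ContinuousLinearMap.adjoint D = D)
    (hD2 : D ∘L D = ContinuousLinearMap.id ℂ H - V ∘L ContinuousLinearMap.adjoint V)
    (y : H) : ‖D y‖ ^ 2 + ‖ContinuousLinearMap.adjoint V y‖ ^ 2 = ‖y‖ ^ 2 := by
  have h1 : D (D y) = y - V (ContinuousLinearMap.adjoint V y) := by
    have := ContinuousLinearMap.ext_iff.1 hD2 y
    simpa using this
  have h2 : (inner ℂ (D y) (D y) : ℂ) = inner ℂ y (D (D y)) := by
    have h := ContinuousLinearMap.adjoint_inner_left D (D y) y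
    rwa [hsa] at h
  have h3 : (inner ℂ (ContinuousLinearMap.adjoint V y) (ContinuousLinearMap.adjoint V y) : ℂ)
      = inner ℂ y (V (ContinuousLinearMap.adjoint V y)) :=
    ContinuousLinearMap.adjoint_inner_left V (ContinuousLinearMap.adjoint V y) y
  have h4 : (inner ℂ (D y) (D y) : ℂ)
      = inner ℂ y y - inner ℂ (ContinuousLinearMap.adjoint V y) (ContinuousLinearMap.adjoint V y) := by
    rw [h2, h1, inner_sub_right, h3]
  have h5 := congrArg (RCLike.re (K := ℂ)) h4
  rw [map_sub, inner_self_eq_norm_sq, inner_self_eq_norm_sq, inner_self_eq_norm_sq] at h5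
  linarith

end Main

set_option maxHeartbeats 1000000 in
/-- Crandall: `Ṽ_{K̃} x = V(P_M x) + D_{V*}(K̃(P⊥ x))` gives a bijective
correspondence between contractions `K̃ : M⊥ → H` with range in the closure of the range
of `D_{V*}` and contractive extensions of `V` to `H`.  Here `D` is the positive square
root of `I − V V*`. -/
theorem stmt_8 {H : Type*} [NormedAddCommGroup H] [InnerProductSpace ℂ H] [CompleteSpace H]
    (M : Submodule ℂ H) [CompleteSpace M] (hproper : M ≠ ⊤)
    (V : M →L[ℂ] H) (hVc : ‖V‖ ≤ 1)
    (D : H →L[ℂ] H) (hD : D.IsPositive)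
    (hD2 : D ∘L D = ContinuousLinearMap.id ℂ H - V ∘L ContinuousLinearMap.adjoint V) :
    (∀ K : Mᗮ →L[ℂ] H, ‖K‖ ≤ 1 →
      (∀ f : Mᗮ, K f ∈ closure (LinearMap.range (D : H →ₗ[ℂ] H) : Set H)) →
      (‖V ∘L Submodule.orthogonalProjectionOnto M + (D ∘L K) ∘L Submodule.orthogonalProjectionOnto Mᗮ‖ ≤ 1 ∧
        ∀ h : M, (V ∘L Submodule.orthogonalProjectionOnto M
            + (D ∘L K) ∘L Submodule.orthogonalProjectionOnto Mᗮ) h = V h)) ∧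
    (∀ W : H →L[ℂ] H, ‖W‖ ≤ 1 → (∀ h : M, W h = V h) →
      ∃! K : Mᗮ →L[ℂ] H,
        ‖K‖ ≤ 1 ∧
        (∀ f : Mᗮ, K f ∈ closure (LinearMap.range (D : H →ₗ[ℂ] H) : Set H)) ∧
        (∀ x, W x = V (Submodule.orthogonalProjectionOnto M x) + D (K (Submodule.orthogonalProjectionOnto Mᗮ x)))) := by
  have hsa : ContinuousLinearMap.adjoint D = D := ContinuousLinearMap.isSelfAdjoint_iff'.1 hD.isSelfAdjoint
  constructor
  · -- Part 1
    intro K hK1 _hK2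
    set W := V ∘L Submodule.orthogonalProjectionOnto M + (D ∘L K) ∘L Submodule.orthogonalProjectionOnto Mᗮ with hW
    have hext : ∀ h : M, W ↑h = V h := by
      intro h
      have h1 : Submodule.orthogonalProjectionOnto M (h : H) = h := Submodule.orthogonalProjectionOnto_mem_subspace_eq_self h
      have h2 : Submodule.orthogonalProjectionOnto Mᗮ (h : H) = 0 :=
        Submodule.orthogonalProjectionOnto_apply_of_mem_orthogonal (M.le_orthogonal_orthogonal h.2)
      simp [hW, h1, h2]
    refine ⟨?_, hext⟩
    have hadd : ContinuousLinearMap.adjoint W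
        = ContinuousLinearMap.adjoint (V ∘L Submodule.orthogonalProjectionOnto M)
          + ContinuousLinearMap.adjoint ((D ∘L K) ∘L Submodule.orthogonalProjectionOnto Mᗮ) := by
      rw [hW, ← ContinuousLinearMap.star_eq_adjoint, ← ContinuousLinearMap.star_eq_adjoint,
        ← ContinuousLinearMap.star_eq_adjoint, star_add]
    have hWadj : ContinuousLinearMap.adjoint W
        = M.subtypeL ∘L ContinuousLinearMap.adjoint V
          + Mᗮ.subtypeL ∘L (ContinuousLinearMap.adjoint K ∘L D) := by
      rw [hadd, ContinuousLinearMap.adjoint_comp, ContinuousLinearMap.adjoint_comp,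
        ContinuousLinearMap.adjoint_comp, Submodule.adjoint_orthogonalProjectionOnto,
        Submodule.adjoint_orthogonalProjectionOnto, hsa]
    have hbound : ∀ y : H, ‖ContinuousLinearMap.adjoint W y‖ ≤ 1 * ‖y‖ := by
      intro y
      have hpt : ContinuousLinearMap.adjoint W y
          = (↑(ContinuousLinearMap.adjoint V y) : H)
            + ↑(ContinuousLinearMap.adjoint K (D y)) := by
        rw [hWadj]; rfl
      have hortho : (inner ℂ (↑(ContinuousLinearMap.adjoint V y) : H)
          (↑(ContinuousLinearMap.adjoint K (D y)) : H) : ℂ) = 0 :=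
        Submodule.inner_right_of_mem_orthogonal (SetLike.coe_mem _) (SetLike.coe_mem _)
      have hsq : ‖ContinuousLinearMap.adjoint W y‖ ^ 2
          = ‖ContinuousLinearMap.adjoint V y‖ ^ 2
            + ‖ContinuousLinearMap.adjoint K (D y)‖ ^ 2 := by
        have hns := norm_add_sq_eq_norm_sq_add_norm_sq_of_inner_eq_zero _ _ hortho
        rw [hpt]
        simp only [pow_two]
        simpa using hns
      have hKD : ‖ContinuousLinearMap.adjoint K (D y)‖ ≤ ‖D y‖ := by
        calc ‖ContinuousLinearMap.adjoint K (D y)‖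
            ≤ ‖ContinuousLinearMap.adjoint K‖ * ‖D y‖ := ContinuousLinearMap.le_opNorm _ _
          _ ≤ 1 * ‖D y‖ := by
              have : ‖ContinuousLinearMap.adjoint K‖ = ‖K‖ :=
                ContinuousLinearMap.adjoint.norm_map K
              rw [this]
              exact mul_le_mul_of_nonneg_right hK1 (norm_nonneg _)
          _ = ‖D y‖ := one_mul _
      have hsq2 : ‖ContinuousLinearMap.adjoint W y‖ ^ 2 ≤ ‖y‖ ^ 2 := by
        have hd := crandall_Dsq M V D hsa hD2 y
        have hKD2 : ‖ContinuousLinearMap.adjoint K (D y)‖ ^ 2 ≤ ‖D y‖ ^ 2 :=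
          pow_le_pow_left₀ (norm_nonneg _) hKD 2
        linarith [hsq]
      have := Real.sqrt_le_sqrt hsq2
      rw [Real.sqrt_sq (norm_nonneg _), Real.sqrt_sq (norm_nonneg _)] at this
      rw [one_mul]
      exact this
    have hWadjnorm : ‖ContinuousLinearMap.adjoint W‖ ≤ 1 :=
      ContinuousLinearMap.opNorm_le_bound _ zero_le_one hbound
    calc ‖W‖ = ‖ContinuousLinearMap.adjoint W‖ := (ContinuousLinearMap.adjoint.norm_map W).symm
      _ ≤ 1 := hWadjnorm
  · -- Part 2
    intro W hWnorm hWext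
    set T : H →L[ℂ] Mᗮ := (Submodule.orthogonalProjectionOnto Mᗮ) ∘L ContinuousLinearMap.adjoint W with hTdef
    have hproj : ∀ y : H, (↑(Submodule.orthogonalProjectionOnto M (ContinuousLinearMap.adjoint W y)) : H)
        = ↑(ContinuousLinearMap.adjoint V y) := by
      intro y
      apply M.eq_starProjection_of_mem_of_inner_eq_zero (SetLike.coe_mem _)
      intro w hw
      rw [inner_sub_left]
      have h1 : (inner ℂ (ContinuousLinearMap.adjoint W y) w : ℂ) = inner ℂ y (W w) :=
        ContinuousLinearMap.adjoint_inner_left W w y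
      have h2 : (inner ℂ (↑(ContinuousLinearMap.adjoint V y) : H) w : ℂ)
          = inner ℂ y (V ⟨w, hw⟩) := by
        have h := ContinuousLinearMap.adjoint_inner_left V (⟨w, hw⟩ : M) y
        rwa [Submodule.coe_inner] at h
      rw [h1, h2, show W w = V ⟨w, hw⟩ from hWext ⟨w, hw⟩, sub_self]
    have hTest : ∀ y, ‖T y‖ ≤ ‖D y‖ := by
      intro y
      have hdec : ContinuousLinearMap.adjoint W y
          = ↑(Submodule.orthogonalProjectionOnto M (ContinuousLinearMap.adjoint W y))
            + ↑(Submodule.orthogonalProjectionOnto Mᗮ (ContinuousLinearMap.adjoint W y)) :=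
        (Submodule.starProjection_add_starProjection_orthogonal (K := M) _).symm
      have hsq : ‖ContinuousLinearMap.adjoint W y‖ ^ 2
          = ‖ContinuousLinearMap.adjoint V y‖ ^ 2 + ‖T y‖ ^ 2 := by
        have hns := norm_add_sq_eq_norm_sq_add_norm_sq_of_inner_eq_zero
          (↑(ContinuousLinearMap.adjoint V y) : H)
          (↑(Submodule.orthogonalProjectionOnto Mᗮ (ContinuousLinearMap.adjoint W y)) : H)
          (Submodule.inner_right_of_mem_orthogonal (K := M)
            (SetLike.coe_mem _) (SetLike.coe_mem _))
        conv_lhs => rw [hdec, hproj y]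
        simp only [pow_two]
        exact hns
      have hWy : ‖ContinuousLinearMap.adjoint W y‖ ≤ ‖y‖ := by
        calc ‖ContinuousLinearMap.adjoint W y‖
            ≤ ‖ContinuousLinearMap.adjoint W‖ * ‖y‖ := ContinuousLinearMap.le_opNorm _ _
          _ ≤ 1 * ‖y‖ := by
              have : ‖ContinuousLinearMap.adjoint W‖ = ‖W‖ :=
                ContinuousLinearMap.adjoint.norm_map W
              rw [this]
              exact mul_le_mul_of_nonneg_right hWnorm (norm_nonneg _)
          _ = ‖y‖ := one_mul _
      have hWy2 : ‖ContinuousLinearMap.adjoint W y‖ ^ 2 ≤ ‖y‖ ^ 2 :=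
        pow_le_pow_left₀ (norm_nonneg _) hWy 2
      have hd := crandall_Dsq M V D hsa hD2 y
      have h2 : ‖T y‖ ^ 2 ≤ ‖D y‖ ^ 2 := by linarith
      have := Real.sqrt_le_sqrt h2
      rwa [Real.sqrt_sq (norm_nonneg _), Real.sqrt_sq (norm_nonneg _)] at this
    obtain ⟨K, hK1, hK2, hK3⟩ := crandall_factor D hsa T hTest
    have adjT : ContinuousLinearMap.adjoint T = W ∘L Mᗮ.subtypeL := by
      rw [hTdef, ContinuousLinearMap.adjoint_comp, ContinuousLinearMap.adjoint_adjoint,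
        Submodule.adjoint_orthogonalProjectionOnto]
    have hDK : ∀ f : Mᗮ, D (K f) = W ↑f := by
      intro f
      have h := ContinuousLinearMap.ext_iff.1 hK3 f
      rw [adjT] at h
      exact h
    have formula : ∀ x, W x = V (Submodule.orthogonalProjectionOnto M x)
        + D (K (Submodule.orthogonalProjectionOnto Mᗮ x)) := by
      intro x
      conv_lhs => rw [← show (↑(Submodule.orthogonalProjectionOnto M x) : H) + ↑(Submodule.orthogonalProjectionOnto Mᗮ x) = x from Submodule.starProjection_add_starProjection_orthogonal (K := M) x]
      rw [map_add, hWext (Submodule.orthogonalProjectionOnto M x), hDK (Submodule.orthogonalProjectionOnto Mᗮ x)]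
    refine ⟨K, ⟨hK1, hK2, formula⟩, ?_⟩
    rintro K' ⟨hK1', hK2', hform'⟩
    ext f
    have hPf : Submodule.orthogonalProjectionOnto M (f : H) = 0 :=
      Submodule.orthogonalProjectionOnto_apply_of_mem_orthogonal f.2
    have hQf : Submodule.orthogonalProjectionOnto Mᗮ (f : H) = f := Submodule.orthogonalProjectionOnto_mem_subspace_eq_self f
    have h1 : D (K' f) = W ↑f := by
      have h := hform' (f : H)
      rw [hPf, hQf, map_zero, zero_add] at h
      exact h.symm
    have h2 : D (K f) = W ↑f := hDK f
    set z := K' f - K f with hz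
    have hzD : D z = 0 := by rw [hz, map_sub, h1, h2, sub_self]
    have hm1 : K' f ∈ (LinearMap.range (D : H →ₗ[ℂ] H) : Submodule ℂ H).topologicalClosure := by
      rw [← SetLike.mem_coe, Submodule.topologicalClosure_coe]
      exact hK2' f
    have hm2 : K f ∈ (LinearMap.range (D : H →ₗ[ℂ] H) : Submodule ℂ H).topologicalClosure := by
      rw [← SetLike.mem_coe, Submodule.topologicalClosure_coe]
      exact hK2 f
    have hzmem : z ∈ (LinearMap.range (D : H →ₗ[ℂ] H) : Submodule ℂ H).topologicalClosure :=
      sub_mem hm1 hm2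
    have hinner : ∀ u : H, (inner ℂ (D u) z : ℂ) = 0 := by
      intro u
      have h := ContinuousLinearMap.adjoint_inner_right D u z
      rw [hsa, hzD, inner_zero_right] at h
      exact h.symm
    have hzero : (inner ℂ z z : ℂ) = 0 := by
      have hcl : closure ((LinearMap.range (D : H →ₗ[ℂ] H) : Submodule ℂ H) : Set H)
          ⊆ {w : H | (inner ℂ w z : ℂ) = 0} := by
        apply closure_minimal
        · intro w hw'
          obtain ⟨u, hu⟩ := hw'
          rw [← hu]
          exact hinner u
        · exact isClosed_eq (continuous_id.inner continuous_const) continuous_const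
      apply hcl
      rw [← Submodule.topologicalClosure_coe]
      exact hzmem
    have hz0 : z = 0 := inner_self_eq_zero.mp hzero
    exact sub_eq_zero.mp hz0
end

section
/- Let C be a conjugation on H, M a closed proper subspace of H, and V : M → H a C-symmetric contraction. Then for every h ∈ M, ‖D_{V*}(C h)‖² − ‖P⊥(C(V h))‖² = ‖h‖² − ‖V h‖², and in particular ‖P⊥(C(V h))‖ ≤ ‖D_{V*}(C h)‖ (so the map X₀ : D_{V*}(C h) ↦ P⊥(C(V h)), h ∈ M, is a well-defined contraction). -/
local notation "⟪" x ", " y "⟫" => @inner ℂ _ _ x y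

/-- for a `C`-symmetric contraction `V` on the closed subspace `M`, one has
`‖D_{V*}(C h)‖² − ‖P⊥(C(V h))‖² = ‖h‖² − ‖V h‖²` for all `h ∈ M`, and in particular
`‖P⊥(C(V h))‖ ≤ ‖D_{V*}(C h)‖`.  Here `D` is the positive square root of `I − V V*`. -/
theorem stmt_9 {H : Type*} [NormedAddCommGroup H] [InnerProductSpace ℂ H] [CompleteSpace H]
    (C : H → H) (hC : IsConjugation C)
    (M : Submodule ℂ H) [CompleteSpace M] (hproper : M ≠ ⊤)
    (V : M →L[ℂ] H)
    (hV : ∀ x y : M, ⟪C (y : H), V x⟫ = ⟪C (V y), (x : H)⟫)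
    (hVc : ‖V‖ ≤ 1)
    (D : H →L[ℂ] H) (hD : D.IsPositive)
    (hD2 : D ∘L D = ContinuousLinearMap.id ℂ H - V ∘L ContinuousLinearMap.adjoint V) :
    ∀ h : M,
      ‖D (C (h : H))‖ ^ 2 - ‖(Submodule.orthogonalProjectionOnto Mᗮ (C (V h)) : H)‖ ^ 2
          = ‖(h : H)‖ ^ 2 - ‖V h‖ ^ 2 ∧
      ‖(Submodule.orthogonalProjectionOnto Mᗮ (C (V h)) : H)‖ ≤ ‖D (C (h : H))‖ := by
  intro h
  obtain ⟨hadd, hsmul, hnorm, hinv⟩ := hC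
  have hsa : ContinuousLinearMap.adjoint D = D := hD.isSelfAdjoint.adjoint_eq
  set x := C (h : H) with hx
  -- key1 : ‖D x‖² = ‖x‖² − ‖V* x‖²
  have key1 : ‖D x‖ ^ 2 = ‖x‖ ^ 2 - ‖ContinuousLinearMap.adjoint V x‖ ^ 2 := by
    have h1 : (⟪D x, D x⟫ : ℂ) = ⟪(D ∘L D) x, x⟫ := by
      have h0 := ContinuousLinearMap.adjoint_inner_left D x (D x)
      rw [hsa] at h0
      simpa [ContinuousLinearMap.comp_apply] using h0.symm
    have h2 : (⟪(D ∘L D) x, x⟫ : ℂ) = ⟪x, x⟫ - ⟪ContinuousLinearMap.adjoint V x,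
        ContinuousLinearMap.adjoint V x⟫ := by
      rw [hD2]
      simp only [ContinuousLinearMap.sub_apply, ContinuousLinearMap.id_apply,
        ContinuousLinearMap.comp_apply, inner_sub_left]
      rw [← ContinuousLinearMap.adjoint_inner_right V]
    have := congrArg Complex.re (h1.trans h2)
    simpa [← @inner_self_eq_norm_sq ℂ] using this
  -- P_M (C (V h)) = V* x
  have key2 : (Submodule.orthogonalProjectionOnto M (C (V h)) : H) = (ContinuousLinearMap.adjoint V x : H) := by
    rw [← Submodule.starProjection_apply]
    apply Submodule.eq_starProjection_of_mem_of_inner_eq_zero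
      (Submodule.coe_mem _)
    intro w hw
    rw [inner_sub_left, sub_eq_zero]
    calc (⟪C (V h), w⟫ : ℂ) = ⟪C (h : H), V ⟨w, hw⟩⟫ := (hV ⟨w, hw⟩ h).symm
      _ = ⟪ContinuousLinearMap.adjoint V x, (⟨w, hw⟩ : M)⟫ :=
          (ContinuousLinearMap.adjoint_inner_left V ⟨w, hw⟩ x).symm
      _ = ⟪(ContinuousLinearMap.adjoint V x : H), w⟫ := by rw [Submodule.coe_inner]
  have pyth := Submodule.norm_sq_eq_add_norm_sq_projection (C (V h)) M
  have hVle : ‖V h‖ ≤ ‖(h : H)‖ := by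
    calc ‖V h‖ ≤ ‖V‖ * ‖h‖ := V.le_opNorm h
    _ ≤ 1 * ‖h‖ := by
        exact mul_le_mul_of_nonneg_right hVc (norm_nonneg _)
    _ = ‖(h : H)‖ := by rw [one_mul]; rfl
  have hmain : ‖D x‖ ^ 2 - ‖(Submodule.orthogonalProjectionOnto Mᗮ (C (V h)) : H)‖ ^ 2
      = ‖(h : H)‖ ^ 2 - ‖V h‖ ^ 2 := by
    have hcv : ‖C (V h)‖ = ‖V h‖ := hnorm _
    have hch : ‖x‖ = ‖(h : H)‖ := hnorm _
    have hproj : ‖(Submodule.orthogonalProjectionOnto M (C (V h)) : H)‖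
        = ‖ContinuousLinearMap.adjoint V x‖ := by
      rw [key2, Submodule.norm_coe]
    have hn1 : ‖Submodule.orthogonalProjectionOnto M (C (V h))‖
        = ‖(Submodule.orthogonalProjectionOnto M (C (V h)) : H)‖ := rfl
    have hn2 : ‖Submodule.orthogonalProjectionOnto Mᗮ (C (V h))‖
        = ‖(Submodule.orthogonalProjectionOnto Mᗮ (C (V h)) : H)‖ := rfl
    have hn3 : ‖ContinuousLinearMap.adjoint V x‖
        = ‖(ContinuousLinearMap.adjoint V x : H)‖ := (Submodule.norm_coe _).symm
    rw [hn1, hn2] at pyth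
    rw [key1, hch]
    have : ‖(Submodule.orthogonalProjectionOnto Mᗮ (C (V h)) : H)‖ ^ 2
        = ‖V h‖ ^ 2 - ‖ContinuousLinearMap.adjoint V x‖ ^ 2 := by
      rw [hn3, ← key2]
      rw [hcv] at pyth
      linarith
    rw [this]
    ring
  refine ⟨hmain, ?_⟩
  have h1 : ‖(Submodule.orthogonalProjectionOnto Mᗮ (C (V h)) : H)‖ ^ 2 ≤ ‖D x‖ ^ 2 := by
    nlinarith [norm_nonneg (V h), norm_nonneg ((h : H))]
  exact (pow_le_pow_iff_left₀ (norm_nonneg _) (norm_nonneg _) two_ne_zero).mp h1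
end

section
/- Let C be a conjugation on H, M a closed proper subspace of H, and V : M → H a C-symmetric contraction. Let K̃ : M⊥ → H be a contraction with range contained in 𝔇_{V*}, and let Ṽ_{K̃} be the contractive extension of V defined by Ṽ_{K̃} x = V(P_M x) + D_{V*}(K̃(P⊥ x)). Then Ṽ_{K̃} is C-self-adjoint if and only if the following two conditions hold: (i) K̃*(D_{V*}(C h)) = P⊥(C(V h)) for all h ∈ M, and (ii) P⊥(C(D_{V*}(K̃ f))) = K̃*(D_{V*}(C f)) for all f ∈ M⊥, where K̃* : H → M⊥ is the adjoint of K̃ and its values are regarded as elements of H. -/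
local notation "⟪" x ", " y "⟫" => @inner ℂ _ _ x y

lemma IsConjugation.map_sub {H : Type*} [NormedAddCommGroup H] [InnerProductSpace ℂ H]
    {C : H → H} (hC : IsConjugation C) (x y : H) : C (x - y) = C x - C y := by
  obtain ⟨hadd, hsmul, -, -⟩ := hC
  have hneg : C (-y) = -C y := by
    have := hsmul (-1) y
    simpa using this
  rw [sub_eq_add_neg, hadd, hneg, sub_eq_add_neg]

/-- A conjugation is antiunitary: `⟪C a, C b⟫ = ⟪b, a⟫`. -/
lemma IsConjugation.inner_conj_s10 {H : Type*} [NormedAddCommGroup H] [InnerProductSpace ℂ H]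
    {C : H → H} (hC : IsConjugation C) (a b : H) : ⟪C a, C b⟫ = ⟪b, a⟫ := by
  obtain ⟨hadd, hsmul, hnorm, hinv⟩ := hC
  have hsub := IsConjugation.map_sub ⟨hadd, hsmul, hnorm, hinv⟩
  have hI : ∀ x : H, Complex.I • C x = C ((-Complex.I) • x) := by
    intro x
    rw [hsmul]
    norm_num
  have h1 : ‖C a + C b‖ = ‖b + a‖ := by rw [← hadd, hnorm, add_comm]
  have h2 : ‖C a - C b‖ = ‖b - a‖ := by rw [← hsub, hnorm, norm_sub_rev]
  have hsmulI : ∀ x : H, ‖Complex.I • x‖ = ‖x‖ := by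
    intro x
    rw [norm_smul, Complex.norm_I, one_mul]
  have alg3 : b - Complex.I • a = (-Complex.I) • (a + Complex.I • b) := by
    rw [smul_add, smul_smul, neg_mul, Complex.I_mul_I, neg_neg, one_smul, neg_smul,
      ← sub_eq_neg_add]
  have alg4 : b + Complex.I • a = Complex.I • (a - Complex.I • b) := by
    rw [smul_sub, smul_smul, Complex.I_mul_I, neg_smul, one_smul, sub_neg_eq_add, add_comm]
  have h3 : ‖C a - Complex.I • C b‖ = ‖b - Complex.I • a‖ := by
    calc ‖C a - Complex.I • C b‖ = ‖a - -Complex.I • b‖ := by rw [hI, ← hsub, hnorm]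
      _ = ‖a + Complex.I • b‖ := by rw [neg_smul, sub_neg_eq_add]
      _ = ‖b - Complex.I • a‖ := by rw [alg3, norm_smul]; simp
  have h4 : ‖C a + Complex.I • C b‖ = ‖b + Complex.I • a‖ := by
    calc ‖C a + Complex.I • C b‖ = ‖a + -Complex.I • b‖ := by rw [hI, ← hadd, hnorm]
      _ = ‖a - Complex.I • b‖ := by rw [neg_smul, ← sub_eq_add_neg]
      _ = ‖b + Complex.I • a‖ := by rw [alg4, norm_smul]; simp
  rw [inner_eq_sum_norm_sq_div_four, inner_eq_sum_norm_sq_div_four]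
  simp only [RCLike.I_to_complex]
  rw [h1, h2, h3, h4]

/-- the contractive extension `Ṽ_{K̃} x = V(P_M x) + D_{V*}(K̃(P⊥ x))` of a
`C`-symmetric contraction `V` is `C`-self-adjoint iff `K̃*(D_{V*}(C h)) = P⊥(C(V h))` for
all `h ∈ M` and `P⊥(C(D_{V*}(K̃ f))) = K̃*(D_{V*}(C f))` for all `f ∈ M⊥`. -/
theorem stmt_10 {H : Type*} [NormedAddCommGroup H] [InnerProductSpace ℂ H] [CompleteSpace H]
    (C : H → H) (hC : IsConjugation C)
    (M : Submodule ℂ H) [CompleteSpace M] (hproper : M ≠ ⊤)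
    (V : M →L[ℂ] H)
    (hV : ∀ x y : M, ⟪C (y : H), V x⟫ = ⟪C (V y), (x : H)⟫)
    (hVc : ‖V‖ ≤ 1)
    (D : H →L[ℂ] H) (hD : D.IsPositive)
    (hD2 : D ∘L D = ContinuousLinearMap.id ℂ H - V ∘L ContinuousLinearMap.adjoint V)
    (K : Mᗮ →L[ℂ] H) (hKc : ‖K‖ ≤ 1)
    (hKran : ∀ f : Mᗮ, K f ∈ closure (LinearMap.range (D : H →ₗ[ℂ] H) : Set H))
    (W : H →L[ℂ] H)
    (hW : ∀ x, W x = V (Submodule.orthogonalProjectionOnto M x) + D (K (Submodule.orthogonalProjectionOnto Mᗮ x))) :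
    (∀ x, W x = C (ContinuousLinearMap.adjoint W (C x))) ↔
      ((∀ h : M, ((ContinuousLinearMap.adjoint K (D (C (h : H))) : H))
          = ((Submodule.orthogonalProjectionOnto Mᗮ (C (V h)) : H))) ∧
       (∀ f : Mᗮ, ((Submodule.orthogonalProjectionOnto Mᗮ (C (D (K f))) : H))
          = ((ContinuousLinearMap.adjoint K (D (C (f : H))) : H)))) := by
  have hadd := hC.1
  have hinv := hC.2.2.2
  have key : ∀ a b : H, ⟪C a, C b⟫ = ⟪b, a⟫ := hC.inner_conj_s10
  have flipC : ∀ a b : H, ⟪C a, b⟫ = ⟪C b, a⟫ := by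
    intro a b
    conv_lhs => rw [← hinv b]
    exact key a (C b)
  -- projections of elements of `M` and `Mᗮ`
  have hPM : ∀ h : M, Submodule.orthogonalProjectionOnto M (h : H) = h := fun h =>
    Submodule.orthogonalProjectionOnto_mem_subspace_eq_self h
  have hPoM : ∀ h : M, Submodule.orthogonalProjectionOnto Mᗮ (h : H) = 0 := fun h =>
    Submodule.orthogonalProjectionOnto_orthogonal_apply_eq_zero h.2
  have hPMo : ∀ f : Mᗮ, Submodule.orthogonalProjectionOnto M (f : H) = 0 := fun f =>
    Submodule.orthogonalProjectionOnto_apply_of_mem_orthogonal f.2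
  have hPoo : ∀ f : Mᗮ, Submodule.orthogonalProjectionOnto Mᗮ (f : H) = f := fun f =>
    Submodule.orthogonalProjectionOnto_mem_subspace_eq_self f
  have hWM : ∀ h : M, W (h : H) = V h := by
    intro h
    rw [hW, hPM, hPoM]
    simp
  have hWo : ∀ f : Mᗮ, W (f : H) = D (K f) := by
    intro f
    rw [hW, hPMo, hPoo]
    simp
  -- D is self-adjoint
  have hDadj : ContinuousLinearMap.adjoint D = D :=
    (ContinuousLinearMap.isSelfAdjoint_iff').mp hD.isSelfAdjoint
  have hDsa : ∀ x y : H, ⟪D x, y⟫ = ⟪x, D y⟫ := by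
    intro x y
    conv_lhs => rw [← hDadj]
    exact ContinuousLinearMap.adjoint_inner_left D y x
  -- inner products against values of `adjoint K` and projections
  have innerK : ∀ (f : Mᗮ) (z : H),
      ⟪(f : H), ((ContinuousLinearMap.adjoint K z : Mᗮ) : H)⟫ = ⟪K f, z⟫ := by
    intro f z
    rw [← Submodule.coe_inner]
    exact ContinuousLinearMap.adjoint_inner_right K f z
  have innerP : ∀ (f : Mᗮ) (z : H),
      ⟪(f : H), ((Submodule.orthogonalProjectionOnto Mᗮ z : Mᗮ) : H)⟫ = ⟪(f : H), z⟫ := by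
    intro f z
    rw [← Submodule.coe_inner Mᗮ f (Submodule.orthogonalProjectionOnto Mᗮ z)]
    exact Submodule.inner_orthogonalProjectionOnto_eq_of_mem_left (K := Mᗮ) f z
  constructor
  · -- forward direction
    intro hL
    have S' : ∀ x y : H, ⟪C y, W x⟫ = ⟪C x, W y⟫ := by
      intro x y
      calc ⟪C y, W x⟫ = ⟪C y, C (ContinuousLinearMap.adjoint W (C x))⟫ := by rw [← hL]
        _ = ⟪ContinuousLinearMap.adjoint W (C x), y⟫ := key _ _
        _ = ⟪C x, W y⟫ := ContinuousLinearMap.adjoint_inner_left W y (C x)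
    constructor
    · intro h
      have h' : ContinuousLinearMap.adjoint K (D (C (h : H)))
          = Submodule.orthogonalProjectionOnto Mᗮ (C (V h)) := by
        apply ext_inner_left ℂ
        intro f
        rw [Submodule.coe_inner, innerK, Submodule.coe_inner, innerP]
        have e1 : ⟪C (f : H), V h⟫ = ⟪C ((h : M) : H), D (K f)⟫ := by
          have := S' (h : H) (f : H)
          rwa [hWM, hWo] at this
        have e2 : ⟪C (V h), (f : H)⟫ = ⟪C ((h : M) : H), D (K f)⟫ := by
          rw [← flipC]; exact e1
        have e3 := congrArg (starRingEnd ℂ) e2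
        rw [inner_conj_symm, inner_conj_symm] at e3
        -- e3 : ⟪f, C (V h)⟫ = ⟪D (K f), C h⟫
        rw [← hDsa]
        exact e3.symm
      rw [h']
    · intro f
      have h' : Submodule.orthogonalProjectionOnto Mᗮ (C (D (K f)))
          = ContinuousLinearMap.adjoint K (D (C (f : H))) := by
        apply ext_inner_left ℂ
        intro f'
        rw [Submodule.coe_inner, innerP, Submodule.coe_inner, innerK]
        have e1 : ⟪C (f' : H), D (K f)⟫ = ⟪C ((f : Mᗮ) : H), D (K f')⟫ := by
          have := S' (f : H) (f' : H)
          rwa [hWo, hWo] at this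
        have e2 : ⟪C (D (K f)), (f' : H)⟫ = ⟪C ((f : Mᗮ) : H), D (K f')⟫ := by
          rw [← flipC]; exact e1
        have e3 := congrArg (starRingEnd ℂ) e2
        rw [inner_conj_symm, inner_conj_symm] at e3
        -- e3 : ⟪f', C (D (K f))⟫ = ⟪D (K f'), C f⟫
        rw [← hDsa]
        exact e3
      rw [h']
  · -- backward direction
    rintro ⟨hi, hii⟩
    have mix1 : ∀ (h : M) (f : Mᗮ), ⟪C (f : H), V h⟫ = ⟪C ((h : M) : H), D (K f)⟫ := by
      intro h f
      have e1 : ⟪(f : H), ((ContinuousLinearMap.adjoint K (D (C (h : H))) : Mᗮ) : H)⟫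
          = ⟪(f : H), ((Submodule.orthogonalProjectionOnto Mᗮ (C (V h)) : Mᗮ) : H)⟫ := by
        rw [hi h]
      rw [innerK, innerP] at e1
      -- e1 : ⟪K f, D (C h)⟫ = ⟪f, C (V h)⟫
      rw [← hDsa] at e1
      have e3 := congrArg (starRingEnd ℂ) e1
      rw [inner_conj_symm, inner_conj_symm] at e3
      -- e3 : ⟪C h, D (K f)⟫ = ⟪C (V h), f⟫
      rw [flipC]
      exact e3.symm
    have mix2 : ∀ (f f' : Mᗮ), ⟪C (f' : H), D (K f)⟫ = ⟪C ((f : Mᗮ) : H), D (K f')⟫ := by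
      intro f f'
      have e1 : ⟪(f' : H), ((Submodule.orthogonalProjectionOnto Mᗮ (C (D (K f))) : Mᗮ) : H)⟫
          = ⟪(f' : H), ((ContinuousLinearMap.adjoint K (D (C (f : H))) : Mᗮ) : H)⟫ := by
        rw [hii f]
      rw [innerK, innerP] at e1
      -- e1 : ⟪f', C (D (K f))⟫ = ⟪K f', D (C f)⟫
      rw [← hDsa] at e1
      have e3 := congrArg (starRingEnd ℂ) e1
      rw [inner_conj_symm, inner_conj_symm] at e3
      -- e3 : ⟪C (D (K f)), f'⟫ = ⟪C f, D (K f')⟫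
      rw [flipC]
      exact e3
    have S' : ∀ x y : H, ⟪C y, W x⟫ = ⟪C x, W y⟫ := by
      intro x y
      rw [hW x, hW y]
      have hx : ((Submodule.orthogonalProjectionOnto M x : M) : H) + ((Submodule.orthogonalProjectionOnto Mᗮ x : Mᗮ) : H) = x :=
        M.starProjection_add_starProjection_orthogonal x
      have hy : ((Submodule.orthogonalProjectionOnto M y : M) : H) + ((Submodule.orthogonalProjectionOnto Mᗮ y : Mᗮ) : H) = y :=
        M.starProjection_add_starProjection_orthogonal y
      conv_lhs => rw [← hy, hadd]
      conv_rhs => rw [← hx, hadd]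
      rw [inner_add_left, inner_add_left, inner_add_right, inner_add_right,
        inner_add_right, inner_add_right]
      have T1 : ⟪C ((Submodule.orthogonalProjectionOnto M y : M) : H), V (Submodule.orthogonalProjectionOnto M x)⟫
          = ⟪C ((Submodule.orthogonalProjectionOnto M x : M) : H), V (Submodule.orthogonalProjectionOnto M y)⟫ := by
        rw [hV, flipC]
      have T2 : ⟪C ((Submodule.orthogonalProjectionOnto M y : M) : H),
            D (K (Submodule.orthogonalProjectionOnto Mᗮ x))⟫
          = ⟪C ((Submodule.orthogonalProjectionOnto Mᗮ x : Mᗮ) : H), V (Submodule.orthogonalProjectionOnto M y)⟫ :=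
        (mix1 _ _).symm
      have T3 : ⟪C ((Submodule.orthogonalProjectionOnto Mᗮ y : Mᗮ) : H), V (Submodule.orthogonalProjectionOnto M x)⟫
          = ⟪C ((Submodule.orthogonalProjectionOnto M x : M) : H),
              D (K (Submodule.orthogonalProjectionOnto Mᗮ y))⟫ :=
        mix1 _ _
      have T4 : ⟪C ((Submodule.orthogonalProjectionOnto Mᗮ y : Mᗮ) : H),
            D (K (Submodule.orthogonalProjectionOnto Mᗮ x))⟫
          = ⟪C ((Submodule.orthogonalProjectionOnto Mᗮ x : Mᗮ) : H),
              D (K (Submodule.orthogonalProjectionOnto Mᗮ y))⟫ :=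
        mix2 _ _
      rw [T1, T2, T3, T4]
      ring
    intro x
    apply ext_inner_left ℂ
    intro z
    calc ⟪z, W x⟫ = ⟪C (C z), W x⟫ := by rw [hinv]
      _ = ⟪C x, W (C z)⟫ := S' x (C z)
      _ = ⟪ContinuousLinearMap.adjoint W (C x), C z⟫ :=
          (ContinuousLinearMap.adjoint_inner_left W (C z) (C x)).symm
      _ = ⟪C (C (ContinuousLinearMap.adjoint W (C x))), C z⟫ := by rw [hinv]
      _ = ⟪z, C (ContinuousLinearMap.adjoint W (C x))⟫ := key _ _
end

section
/- Let C be a conjugation on H, M a closed proper subspace of H, and V : M → H a C-symmetric contraction. If W̃ is any C-self-adjoint contraction on H extending V, then there exists a contraction K̃ : M⊥ → H with range contained in 𝔇_{V*} satisfying K̃*(D_{V*}(C h)) = P⊥(C(V h)) for all h ∈ M, such that W̃ x = (1/2)(Ṽ_{K̃} x + C(Ṽ_{K̃}*(C x))) for all x ∈ H, where Ṽ_{K̃} x = V(P_M x) + D_{V*}(K̃(P⊥ x)). -/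
local notation "⟪" x ", " y "⟫" => @inner ℂ _ _ x y

set_option maxHeartbeats 1000000 in
/-- every `C`-self-adjoint contractive extension `W̃` of a `C`-symmetric
contraction `V` has the form `W̃ = (Ṽ_{K̃} + C Ṽ_{K̃}* C)/2` with
`Ṽ_{K̃} = V P_M + D_{V*} K̃ P⊥`, where `K̃ : M⊥ → H` is a contraction with range in the
closure of the range of `D_{V*}` whose adjoint extends `X₀ : D_{V*}(C h) ↦ P⊥(C(V h))`. -/
theorem stmt_11 {H : Type*} [NormedAddCommGroup H] [InnerProductSpace ℂ H] [CompleteSpace H]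
    (C : H → H) (hC : IsConjugation C)
    (M : Submodule ℂ H) [CompleteSpace M] (hproper : M ≠ ⊤)
    (V : M →L[ℂ] H)
    (hV : ∀ x y : M, ⟪C (y : H), V x⟫ = ⟪C (V y), (x : H)⟫)
    (hVc : ‖V‖ ≤ 1)
    (D : H →L[ℂ] H) (hD : D.IsPositive)
    (hD2 : D ∘L D = ContinuousLinearMap.id ℂ H - V ∘L ContinuousLinearMap.adjoint V)
    (W : H →L[ℂ] H) (hWc : ‖W‖ ≤ 1)
    (hext : ∀ h : M, W h = V h)
    (hsa : ∀ x, W x = C (ContinuousLinearMap.adjoint W (C x))) :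
    ∃ K : Mᗮ →L[ℂ] H,
      ‖K‖ ≤ 1 ∧
      (∀ f : Mᗮ, K f ∈ closure ((LinearMap.range (D : H →ₗ[ℂ] H) : Submodule ℂ H) : Set H)) ∧
      (∀ h : M, ((ContinuousLinearMap.adjoint K (D (C (h : H))) : H))
          = ((Submodule.orthogonalProjectionOnto Mᗮ (C (V h)) : H))) ∧
      (∀ x, W x = (2⁻¹ : ℂ) •
        ((V ∘L Submodule.orthogonalProjectionOnto M + (D ∘L K) ∘L Submodule.orthogonalProjectionOnto Mᗮ) x
          + C (ContinuousLinearMap.adjoint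
              (V ∘L Submodule.orthogonalProjectionOnto M
                + (D ∘L K) ∘L Submodule.orthogonalProjectionOnto Mᗮ) (C x)))) := by
  classical
  obtain ⟨hCadd, hCsmul, hCnorm, hCinv⟩ := hC
  have hDsa : ContinuousLinearMap.adjoint D = D := hD.isSelfAdjoint.adjoint_eq
  -- the operator `A = W|_{Mᗮ}` and its adjoint
  let A : Mᗮ →L[ℂ] H := W ∘L Mᗮ.subtypeL
  let Ad : H →L[ℂ] Mᗮ := ContinuousLinearMap.adjoint A
  have hAd : Ad = (Submodule.orthogonalProjectionOnto Mᗮ) ∘L ContinuousLinearMap.adjoint W := by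
    show ContinuousLinearMap.adjoint (W ∘L Mᗮ.subtypeL) = _
    rw [ContinuousLinearMap.adjoint_comp, Submodule.adjoint_subtypeL]
  -- W extends V, at the level of adjoints
  have hWV : W ∘L M.subtypeL = V := by
    ext h; exact hext h
  have hWVd : ContinuousLinearMap.adjoint V
      = (Submodule.orthogonalProjectionOnto M) ∘L ContinuousLinearMap.adjoint W := by
    rw [← hWV, ContinuousLinearMap.adjoint_comp, Submodule.adjoint_subtypeL]
  -- ‖D y‖² = ‖y‖² − ‖V* y‖²
  have hDn : ∀ y : H, ‖D y‖ ^ 2 = ‖y‖ ^ 2 - ‖ContinuousLinearMap.adjoint V y‖ ^ 2 := by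
    intro y
    have h1 : (⟪D y, D y⟫ : ℂ) = ⟪y, D (D y)⟫ := by
      have h0 := ContinuousLinearMap.adjoint_inner_left D (D y) y
      rwa [hDsa] at h0
    have h2 : D (D y) = y - V (ContinuousLinearMap.adjoint V y) := by
      have := congrFun (congrArg (fun (T : H →L[ℂ] H) => (T : H → H)) hD2) y
      simpa using this
    have h3 : (⟪y, V (ContinuousLinearMap.adjoint V y)⟫ : ℂ)
        = ⟪ContinuousLinearMap.adjoint V y, ContinuousLinearMap.adjoint V y⟫ :=
      (ContinuousLinearMap.adjoint_inner_left V (ContinuousLinearMap.adjoint V y) y).symm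
    have key : (⟪D y, D y⟫ : ℂ)
        = ⟪y, y⟫ - ⟪ContinuousLinearMap.adjoint V y, ContinuousLinearMap.adjoint V y⟫ := by
      rw [h1, h2, inner_sub_right, h3]
    have key2 := congrArg (RCLike.re (K := ℂ)) key
    rw [map_sub, inner_self_eq_norm_sq, inner_self_eq_norm_sq, inner_self_eq_norm_sq] at key2
    exact key2
  -- the key bound ‖A* y‖ ≤ ‖D y‖
  have hbound : ∀ y : H, ‖Ad y‖ ≤ ‖D y‖ := by
    intro y
    have hpy := Submodule.norm_sq_eq_add_norm_sq_projection (ContinuousLinearMap.adjoint W y) M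
    have hPM : (Submodule.orthogonalProjectionOnto M (ContinuousLinearMap.adjoint W y) : M)
        = ContinuousLinearMap.adjoint V y := by
      rw [hWVd]; rfl
    have hPMo : (Submodule.orthogonalProjectionOnto Mᗮ (ContinuousLinearMap.adjoint W y) : Mᗮ) = Ad y := by
      rw [hAd]; rfl
    rw [hPM, hPMo] at hpy
    have hWy : ‖ContinuousLinearMap.adjoint W y‖ ≤ ‖y‖ := by
      calc ‖ContinuousLinearMap.adjoint W y‖ ≤ ‖ContinuousLinearMap.adjoint W‖ * ‖y‖ :=
            (ContinuousLinearMap.adjoint W).le_opNorm y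
        _ ≤ 1 * ‖y‖ := by
            apply mul_le_mul_of_nonneg_right _ (norm_nonneg y)
            calc ‖ContinuousLinearMap.adjoint W‖ = ‖W‖ :=
                  LinearIsometryEquiv.norm_map ContinuousLinearMap.adjoint W
              _ ≤ 1 := hWc
        _ = ‖y‖ := one_mul _
    have hsq : ‖Ad y‖ ^ 2 ≤ ‖D y‖ ^ 2 := by
      have h1 : ‖ContinuousLinearMap.adjoint W y‖ ^ 2 ≤ ‖y‖ ^ 2 :=
        pow_le_pow_left₀ (norm_nonneg _) hWy 2
      have h2 := hDn y
      linarith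
    calc ‖Ad y‖ = Real.sqrt (‖Ad y‖ ^ 2) := (Real.sqrt_sq (norm_nonneg _)).symm
      _ ≤ Real.sqrt (‖D y‖ ^ 2) := Real.sqrt_le_sqrt hsq
      _ = ‖D y‖ := Real.sqrt_sq (norm_nonneg _)
  -- well-definedness
  have hwd : ∀ y y' : H, D y = D y' → Ad y = Ad y' := by
    intro y y' h
    have h1 := hbound (y - y')
    rw [map_sub, map_sub, h, sub_self, norm_zero] at h1
    exact sub_eq_zero.mp (norm_le_zero_iff.mp h1)
  -- the range of D and its closure
  set R : Submodule ℂ H := LinearMap.range (D : H →ₗ[ℂ] H) with hR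
  set DD : Submodule ℂ H := R.topologicalClosure with hDD
  haveI : CompleteSpace DD := R.isClosed_topologicalClosure.completeSpace_coe
  have hmem : ∀ v : R, ∃ y, D y = (v : H) := fun v => LinearMap.mem_range.mp v.2
  choose g hg using hmem
  -- the densely defined contraction φ
  have hgadd : ∀ u v : R, Ad (g (u + v)) = Ad (g u) + Ad (g v) := by
    intro u v
    have h1 : D (g (u + v)) = D (g u + g v) := by
      rw [map_add, hg, hg, hg]; rfl
    rw [hwd _ _ h1, map_add]
  have hgsmul : ∀ (a : ℂ) (v : R), Ad (g (a • v)) = a • Ad (g v) := by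
    intro a v
    have h1 : D (g (a • v)) = D (a • g v) := by
      rw [map_smul, hg, hg]; rfl
    rw [hwd _ _ h1, map_smul]
  let φ₀ : R →ₗ[ℂ] Mᗮ :=
    { toFun := fun v => Ad (g v)
      map_add' := hgadd
      map_smul' := hgsmul }
  have hφb : ∀ v : R, ‖φ₀ v‖ ≤ 1 * ‖v‖ := by
    intro v
    rw [one_mul]
    calc ‖Ad (g v)‖ ≤ ‖D (g v)‖ := hbound _
      _ = ‖v‖ := by rw [hg]; rfl
  let φc : R →L[ℂ] Mᗮ := φ₀.mkContinuous 1 hφb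
  have hφcnorm : ‖φc‖ ≤ 1 := φ₀.mkContinuous_norm_le zero_le_one hφb
  -- the inclusion of R into its closure
  have hle : R ≤ DD := R.le_topologicalClosure
  let e : R →L[ℂ] DD := (Submodule.inclusion hle).mkContinuous 1
    (fun v => by rw [one_mul]; exact le_of_eq rfl)
  have henorm : ∀ x : R, ‖x‖ ≤ ((1 : NNReal) : ℝ) * ‖e x‖ := by
    intro x
    rw [NNReal.coe_one, one_mul]
    exact le_of_eq rfl
  have hdense : DenseRange e := by
    intro y
    rw [closure_subtype]
    have himg : (Subtype.val '' Set.range e) = (R : Set H) := by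
      ext z
      constructor
      · rintro ⟨w, ⟨x, rfl⟩, rfl⟩
        exact x.2
      · intro hz
        exact ⟨e ⟨z, hz⟩, ⟨⟨z, hz⟩, rfl⟩, rfl⟩
    rw [himg]
    have hy : (y : H) ∈ DD := y.2
    rwa [hDD, ← R.topologicalClosure_coe] at *
  -- extend φ to the closure
  let ext : DD →L[ℂ] Mᗮ := φc.extend e
  have hextnorm : ‖ext‖ ≤ 1 := by
    have h1 := ContinuousLinearMap.opNorm_extend_le φc hdense henorm
    calc ‖ext‖ ≤ ((1 : NNReal) : ℝ) * ‖φc‖ := h1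
      _ ≤ 1 := by rw [NNReal.coe_one, one_mul]; exact hφcnorm
  let L : H →L[ℂ] Mᗮ := ext ∘L (Submodule.orthogonalProjectionOnto DD)
  have hLnorm : ‖L‖ ≤ 1 := by
    calc ‖L‖ ≤ ‖ext‖ * ‖(Submodule.orthogonalProjectionOnto DD : H →L[ℂ] DD)‖ :=
          ContinuousLinearMap.opNorm_comp_le _ _
      _ ≤ 1 * 1 := mul_le_mul hextnorm (Submodule.orthogonalProjectionOnto_norm_le DD)
          (ContinuousLinearMap.opNorm_nonneg _) zero_le_one
      _ = 1 := one_mul 1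
  have hLD : ∀ y : H, L (D y) = Ad y := by
    intro y
    have hmem' : D y ∈ R := LinearMap.mem_range.mpr ⟨y, rfl⟩
    have hmem'' : D y ∈ DD := hle hmem'
    have h1 : Submodule.orthogonalProjectionOnto DD (D y) = ⟨D y, hmem''⟩ :=
      Submodule.orthogonalProjectionOnto_mem_subspace_eq_self (⟨D y, hmem''⟩ : DD)
    have h2 : (⟨D y, hmem''⟩ : DD) = e ⟨D y, hmem'⟩ := rfl
    calc L (D y) = ext (Submodule.orthogonalProjectionOnto DD (D y)) := rfl
      _ = ext (e ⟨D y, hmem'⟩) := by rw [h1, h2]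
      _ = φc ⟨D y, hmem'⟩ := ContinuousLinearMap.extend_eq _ hdense
          (ContinuousLinearMap.isUniformEmbedding_of_bound e henorm).isUniformInducing _
      _ = Ad (g ⟨D y, hmem'⟩) := rfl
      _ = Ad y := hwd _ _ (by rw [hg])
  -- define K
  refine ⟨ContinuousLinearMap.adjoint L, ?_, ?_, ?_, ?_⟩
  · calc ‖ContinuousLinearMap.adjoint L‖ = ‖L‖ :=
        LinearIsometryEquiv.norm_map ContinuousLinearMap.adjoint L
      _ ≤ 1 := hLnorm
  · intro f
    have hKform : ContinuousLinearMap.adjoint L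
        = DD.subtypeL ∘L ContinuousLinearMap.adjoint ext := by
      show ContinuousLinearMap.adjoint (ext ∘L (Submodule.orthogonalProjectionOnto DD)) = _
      rw [ContinuousLinearMap.adjoint_comp, Submodule.adjoint_orthogonalProjectionOnto]
    rw [hKform]
    have : ((ContinuousLinearMap.adjoint ext f : DD) : H) ∈ DD :=
      (ContinuousLinearMap.adjoint ext f).2
    rw [hDD, ← R.topologicalClosure_coe] at *
    exact this
  · intro h
    rw [ContinuousLinearMap.adjoint_adjoint, hLD]
    have hW : ContinuousLinearMap.adjoint W (C (h : H)) = C (V h) := by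
      have h1 := hsa (h : H)
      rw [hext h] at h1
      have h2 := congrArg C h1
      rw [hCinv] at h2
      exact h2.symm
    rw [hAd]
    show ((Submodule.orthogonalProjectionOnto Mᗮ (ContinuousLinearMap.adjoint W (C (h : H))) : Mᗮ) : H) = _
    rw [hW]
  · -- main identity
    have hKD : ContinuousLinearMap.adjoint (ContinuousLinearMap.adjoint L) ∘L D = Ad := by
      ext y
      rw [ContinuousLinearMap.comp_apply, ContinuousLinearMap.adjoint_adjoint]
      exact congrArg Subtype.val (hLD y)
    have hDK : D ∘L ContinuousLinearMap.adjoint L = A := by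
      have h2 := congrArg (fun T => (ContinuousLinearMap.adjoint T : Mᗮ →L[ℂ] H)) hKD
      rw [ContinuousLinearMap.adjoint_comp, ContinuousLinearMap.adjoint_adjoint, hDsa] at h2
      rw [h2]
      show ContinuousLinearMap.adjoint (ContinuousLinearMap.adjoint A) = A
      exact ContinuousLinearMap.adjoint_adjoint A
    have hT : (V ∘L Submodule.orthogonalProjectionOnto M
        + (D ∘L ContinuousLinearMap.adjoint L) ∘L Submodule.orthogonalProjectionOnto Mᗮ) = W := by
      rw [hDK]
      ext x
      rw [ContinuousLinearMap.add_apply, ContinuousLinearMap.comp_apply,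
        ContinuousLinearMap.comp_apply]
      have h1 : V (Submodule.orthogonalProjectionOnto M x) = W ((Submodule.orthogonalProjectionOnto M x : M) : H) :=
        (hext _).symm
      have h2 : A (Submodule.orthogonalProjectionOnto Mᗮ x) = W ((Submodule.orthogonalProjectionOnto Mᗮ x : Mᗮ) : H) := rfl
      rw [h1, h2, ← map_add]
      exact congrArg W (M.starProjection_add_starProjection_orthogonal x)
    intro x
    rw [hT, ← hsa x]
    rw [← two_smul ℂ (W x), smul_smul]
    norm_num
end

section
/- Let T be a closed, densely defined, dissipative operator in a complex Hilbert space H, let λ ∈ ℂ with Im λ > 0, and set N_λ := {φ ∈ H : ⟨T g − conj(λ)•g, φ⟩ = 0 for all g ∈ dom T}, the orthogonal complement of the range of T − conj(λ)I. Then there exists a maximal dissipative operator T̃ in H such that dom T̃ = dom T + N_λ, T̃ f = T f for all f ∈ dom T, and T̃ φ = λ•φ for all φ ∈ N_λ; in particular, T̃ is a maximal dissipative extension of T. -/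
local notation "⟪" x ", " y "⟫" => @inner ℂ _ _ x y

/-- An (unbounded) operator `T` in `H` is dissipative if `Im ⟨T f, f⟩ ≥ 0` on its domain
(first argument of the inner product linear, i.e. `Im ⟪f, T f⟫_Mathlib ≥ 0`). -/
def IsDissipative {H : Type*} [NormedAddCommGroup H] [InnerProductSpace ℂ H]
    (T : H →ₗ.[ℂ] H) : Prop :=
  ∀ f : T.domain, 0 ≤ (⟪(f : H), T f⟫).im

/-- `T` is maximal dissipative if it is dissipative and has no proper dissipative
extension. -/
def IsMaximalDissipative {H : Type*} [NormedAddCommGroup H] [InnerProductSpace ℂ H]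
    (T : H →ₗ.[ℂ] H) : Prop :=
  IsDissipative T ∧ ∀ S : H →ₗ.[ℂ] H, IsDissipative S → T ≤ S → S = T

lemma diss_im_est {H : Type*} [NormedAddCommGroup H] [InnerProductSpace ℂ H]
    (S : H →ₗ.[ℂ] H) (hS : IsDissipative S) (lam : ℂ) (f : S.domain) :
    lam.im * ‖(f : H)‖ ^ 2 ≤ (⟪(f : H), S f - (starRingEnd ℂ) lam • (f : H)⟫).im := by
  have h := hS f
  have him : (⟪(f : H), (f : H)⟫).im = 0 := by
    rw [← RCLike.im_to_complex]; exact inner_self_im (𝕜 := ℂ) _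
  have hre : (⟪(f : H), (f : H)⟫).re = ‖(f : H)‖ ^ 2 := by
    rw [← RCLike.re_to_complex]; exact inner_self_eq_norm_sq (𝕜 := ℂ) _
  rw [inner_sub_right, inner_smul_right]
  simp only [Complex.sub_im, Complex.mul_im, Complex.conj_re, Complex.conj_im, him, hre]
  nlinarith [h]

lemma diss_norm_est {H : Type*} [NormedAddCommGroup H] [InnerProductSpace ℂ H]
    (S : H →ₗ.[ℂ] H) (hS : IsDissipative S) (lam : ℂ) (f : S.domain) :
    lam.im * ‖(f : H)‖ ≤ ‖S f - (starRingEnd ℂ) lam • (f : H)‖ := by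
  have h1 := diss_im_est S hS lam f
  have h2 : (⟪(f : H), S f - (starRingEnd ℂ) lam • (f : H)⟫).im ≤
      ‖(f : H)‖ * ‖S f - (starRingEnd ℂ) lam • (f : H)‖ := by
    calc (⟪(f : H), S f - (starRingEnd ℂ) lam • (f : H)⟫).im
        ≤ ‖(⟪(f : H), S f - (starRingEnd ℂ) lam • (f : H)⟫)‖ := Complex.im_le_norm _
      _ ≤ ‖(f : H)‖ * ‖S f - (starRingEnd ℂ) lam • (f : H)‖ := by
          exact norm_inner_le_norm _ _
  rcases eq_or_lt_of_le (norm_nonneg ((f : H))) with hz | hz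
  · rw [← hz]; simp [norm_nonneg]
  · nlinarith

lemma diss_inj {H : Type*} [NormedAddCommGroup H] [InnerProductSpace ℂ H]
    (S : H →ₗ.[ℂ] H) (hS : IsDissipative S) (lam : ℂ) (hlam : 0 < lam.im) (f : S.domain)
    (hf : S f = (starRingEnd ℂ) lam • (f : H)) : (f : H) = 0 := by
  have h1 := diss_im_est S hS lam f
  rw [hf, sub_self] at h1
  simp only [inner_zero_right, Complex.zero_im] at h1
  have h2 : ‖(f : H)‖ ^ 2 ≤ 0 := by nlinarith
  have h3 : ‖(f : H)‖ = 0 := by nlinarith [norm_nonneg ((f : H)), sq_nonneg ‖(f : H)‖]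
  exact norm_eq_zero.mp h3

set_option maxHeartbeats 1000000 in
/-- for a closed densely defined dissipative `T` and `Im λ > 0`, with
`N_λ = (ran (T − conj(λ) I))ᗮ`, the operator `T̃` with `dom T̃ = dom T + N_λ`, `T̃ ⊇ T`,
`T̃ φ = λ φ` on `N_λ`, exists and is a maximal dissipative extension of `T`. -/
theorem stmt_18 {H : Type*} [NormedAddCommGroup H] [InnerProductSpace ℂ H] [CompleteSpace H]
    (T : H →ₗ.[ℂ] H)
    (hclosed : IsClosed (T.graph : Set (H × H)))
    (hdense : Dense (T.domain : Set H))
    (hdiss : IsDissipative T)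
    (lam : ℂ) (hlam : 0 < lam.im) :
    ∃ T' : H →ₗ.[ℂ] H,
      IsMaximalDissipative T' ∧ T ≤ T' ∧
      ((T'.domain : Set H) =
        {x : H | ∃ u ∈ (T.domain : Set H),
          ∃ v ∈ {φ : H | ∀ g : T.domain,
              ⟪φ, T g - (starRingEnd ℂ) lam • (g : H)⟫ = 0},
            x = u + v}) ∧
      (∀ g : T.domain, ∀ hg : (g : H) ∈ T'.domain, T' ⟨(g : H), hg⟩ = T g) ∧
      (∀ φ : H, (∀ g : T.domain, ⟪φ, T g - (starRingEnd ℂ) lam • (g : H)⟫ = 0) →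
        ∀ hφ : φ ∈ T'.domain, T' ⟨φ, hφ⟩ = lam • φ) := by
  classical
  set cl : ℂ := (starRingEnd ℂ) lam with hcl
  -- the operator A = T - cl on dom T
  set A : T.domain →ₗ[ℂ] H := T.toFun - cl • T.domain.subtype with hA
  have hAapp : ∀ g : T.domain, A g = T g - cl • (g : H) := fun g => rfl
  set R : Submodule ℂ H := LinearMap.range A with hR
  set N : Submodule ℂ H := Rᗮ with hN
  have hNmem : ∀ φ : H, φ ∈ N ↔ ∀ g : T.domain, ⟪φ, T g - cl • (g : H)⟫ = 0 := by
    intro φ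
    rw [hN, Submodule.mem_orthogonal']
    constructor
    · intro h g
      have := h (A g) ⟨g, rfl⟩
      rwa [hAapp] at this
    · rintro h u ⟨g, rfl⟩
      rw [hAapp]; exact h g
  -- norm estimate for A
  have hest : ∀ g : T.domain, lam.im * ‖(g : H)‖ ≤ ‖A g‖ := by
    intro g; rw [hAapp]; exact diss_norm_est T hdiss lam g
  -- closed range via antilipschitz map on the (closed, hence complete) graph
  haveI : CompleteSpace T.graph := hclosed.completeSpace_coe
  set B : T.graph →L[ℂ] H :=
    ((ContinuousLinearMap.snd ℂ H H) - cl • (ContinuousLinearMap.fst ℂ H H)).comp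
      T.graph.subtypeL with hB
  have hBapp : ∀ p : T.graph, B p = (p : H × H).2 - cl • (p : H × H).1 := by
    intro p; simp [hB]
  have hrange : Set.range B = (R : Set H) := by
    ext y
    constructor
    · rintro ⟨p, rfl⟩
      obtain ⟨g, hg⟩ := T.mem_graph_iff'.mp p.2
      refine ⟨g, ?_⟩
      rw [hAapp, hBapp]
      rw [← hg]
    · rintro ⟨g, rfl⟩
      refine ⟨⟨((g : H), T g), T.mem_graph g⟩, ?_⟩
      rw [hBapp, hAapp]
  set K0 : ℝ := (lam.im)⁻¹ + (1 + ‖lam‖ * (lam.im)⁻¹) with hK0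
  have hK0pos : 0 ≤ K0 := by positivity
  have hanti : AntilipschitzWith (Real.toNNReal K0) B := by
    apply B.antilipschitz_of_bound
    intro p
    obtain ⟨g, hg⟩ := T.mem_graph_iff'.mp p.2
    have hB1 : B p = A g := by
      rw [hBapp, hAapp, ← hg]
    have h1 : lam.im * ‖(g : H)‖ ≤ ‖B p‖ := by rw [hB1]; exact hest g
    have hx : ‖(g : H)‖ ≤ (lam.im)⁻¹ * ‖B p‖ := by
      rw [← div_eq_inv_mul, le_div_iff₀ hlam]
      nlinarith [h1]
    have hy : ‖T g‖ ≤ (1 + ‖lam‖ * (lam.im)⁻¹) * ‖B p‖ := by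
      have : T g = B p + cl • (g : H) := by rw [hB1, hAapp]; abel
      rw [this]
      calc ‖B p + cl • (g : H)‖ ≤ ‖B p‖ + ‖cl • (g : H)‖ := norm_add_le _ _
        _ = ‖B p‖ + ‖lam‖ * ‖(g : H)‖ := by
            rw [norm_smul]; simp [hcl]
        _ ≤ ‖B p‖ + ‖lam‖ * ((lam.im)⁻¹ * ‖B p‖) := by
            have := mul_le_mul_of_nonneg_left hx (norm_nonneg lam)
            linarith
        _ = (1 + ‖lam‖ * (lam.im)⁻¹) * ‖B p‖ := by ring
    have hnormp : ‖p‖ = max ‖(p : H × H).1‖ ‖(p : H × H).2‖ := by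
      rw [Submodule.coe_norm, Prod.norm_def]
    rw [Real.coe_toNNReal _ hK0pos, hnormp, ← hg]
    have hBnn : 0 ≤ ‖B p‖ := norm_nonneg _
    have h01 : 0 ≤ (lam.im)⁻¹ := by positivity
    have h02 : 0 ≤ ‖lam‖ * (lam.im)⁻¹ := by positivity
    apply max_le
    · exact hx.trans (mul_le_mul_of_nonneg_right (by rw [hK0]; linarith) hBnn)
    · exact hy.trans (mul_le_mul_of_nonneg_right (by rw [hK0]; linarith) hBnn)
  have hRclosed : IsClosed (R : Set H) := by
    rw [← hrange]
    exact hanti.isClosed_range B.uniformContinuous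
  haveI : CompleteSpace R := hRclosed.completeSpace_coe
  have hsum : R ⊔ N = ⊤ := Submodule.sup_orthogonal_of_hasOrthogonalProjection
  -- trivial intersection
  have hint : ∀ x : H, x ∈ T.domain → x ∈ N → x = 0 := by
    intro x hx hxN
    have h0 : ⟪x, T ⟨x, hx⟩ - cl • x⟫ = 0 := (hNmem x).mp hxN ⟨x, hx⟩
    have h1 := diss_im_est T hdiss lam ⟨x, hx⟩
    rw [h0] at h1
    simp only [Complex.zero_im] at h1
    have h2 : ‖x‖ ^ 2 ≤ 0 := by nlinarith
    have h3 : ‖x‖ = 0 := by nlinarith [norm_nonneg x, sq_nonneg ‖x‖]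
    exact norm_eq_zero.mp h3
  -- the extension
  set Nop : H →ₗ.[ℂ] H := (lam • (LinearMap.id : H →ₗ[ℂ] H)).toPMap N with hNop
  have hNopapp : ∀ v : Nop.domain, Nop v = lam • (v : H) := fun v => rfl
  have hcompat : ∀ (x : T.domain) (y : Nop.domain), (x : H) = y → T x = Nop y := by
    intro x y hxy
    have hx0 : (x : H) = 0 := hint x x.2 (hxy ▸ y.2)
    have hy0 : (y : H) = 0 := hxy ▸ hx0
    have hx1 : x = 0 := Subtype.ext hx0
    have hy1 : y = 0 := Subtype.ext hy0
    rw [hx1, hy1, T.map_zero, Nop.map_zero]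
  set T' : H →ₗ.[ℂ] H := T.sup Nop hcompat with hT'
  have hTle : T ≤ T' := T.left_le_sup Nop hcompat
  have hNople : Nop ≤ T' := T.right_le_sup Nop hcompat
  have hdomT' : T'.domain = T.domain ⊔ N := rfl
  have hT'app : ∀ (u : T.domain) (v : Nop.domain) (z : T'.domain), (u : H) + v = z →
      T' z = T u + lam • (v : H) := by
    intro u v z h
    rw [LinearPMap.sup_apply hcompat u v z h, hNopapp]
  -- dissipativity of T'
  have hdissT' : IsDissipative T' := by
    intro z
    have hz2 : (z : H) ∈ T.domain ⊔ N := z.2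
    obtain ⟨u, hu, v, hv, huv⟩ := Submodule.mem_sup.mp hz2
    have happ : T' z = T ⟨u, hu⟩ + lam • v :=
      hT'app ⟨u, hu⟩ ⟨v, hv⟩ z huv
    have hz3 : (z : H) = u + v := huv.symm
    rw [happ, hz3]
    have hv' : ⟪v, T ⟨u, hu⟩ - cl • u⟫ = 0 := (hNmem v).mp hv ⟨u, hu⟩
    have hvT : ⟪v, T ⟨u, hu⟩⟫ = cl * ⟪v, u⟫ := by
      rw [inner_sub_right, inner_smul_right, sub_eq_zero] at hv'
      exact hv'
    rw [inner_add_left, inner_add_right, inner_add_right, inner_smul_right, inner_smul_right,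
      hvT]
    have h1 := hdiss ⟨u, hu⟩
    have hvvim : (⟪v, v⟫).im = 0 := by
      rw [← RCLike.im_to_complex]; exact inner_self_im (𝕜 := ℂ) _
    have hvvre : (⟪v, v⟫).re = ‖v‖ ^ 2 := by
      rw [← RCLike.re_to_complex]; exact inner_self_eq_norm_sq (𝕜 := ℂ) _
    have hconj : cl * ⟪v, u⟫ = (starRingEnd ℂ) (lam * ⟪u, v⟫) := by
      rw [map_mul, inner_conj_symm, hcl]
    rw [hconj]
    simp only [Complex.add_im, Complex.conj_im, Complex.mul_im, hvvim, hvvre]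
    nlinarith [sq_nonneg ‖v‖]
  -- surjectivity of T' - cl
  have hsurj : ∀ y : H, ∃ z : T'.domain, T' z - cl • (z : H) = y := by
    intro y
    have hy : y ∈ R ⊔ N := by rw [hsum]; trivial
    obtain ⟨r, hr, n, hn, hrn⟩ := Submodule.mem_sup.mp hy
    obtain ⟨u, hu⟩ := hr
    set mu : ℂ := lam - cl with hmu
    have hmune : mu ≠ 0 := by
      intro hc
      have : mu.im = 0 := by rw [hc]; simp
      rw [hmu] at this
      simp only [Complex.sub_im, hcl, Complex.conj_im] at this
      linarith
    have hmem : (u : H) + mu⁻¹ • n ∈ T.domain ⊔ N :=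
      Submodule.add_mem_sup u.2 (Submodule.smul_mem _ _ hn)
    refine ⟨⟨(u : H) + mu⁻¹ • n, hmem⟩, ?_⟩
    have happ : T' ⟨(u : H) + mu⁻¹ • n, hmem⟩ = T u + lam • (mu⁻¹ • n) :=
      hT'app u ⟨mu⁻¹ • n, Submodule.smul_mem _ _ hn⟩ _ rfl
    rw [happ]
    have hAu : T u - cl • (u : H) = r := by rw [← hAapp, hu]
    have hsm : lam • (mu⁻¹ • n) - cl • (mu⁻¹ • n) = n := by
      rw [← sub_smul, smul_smul, ← hmu, mul_inv_cancel₀ hmune, one_smul]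
    calc T u + lam • (mu⁻¹ • n) - cl • ((u : H) + mu⁻¹ • n)
        = (T u - cl • (u : H)) + (lam • (mu⁻¹ • n) - cl • (mu⁻¹ • n)) := by
          rw [smul_add]; abel
      _ = r + n := by rw [hAu, hsm]
      _ = y := hrn
  -- maximality
  have hmax : ∀ S : H →ₗ.[ℂ] H, IsDissipative S → T' ≤ S → S = T' := by
    intro S hS hle
    have hkey : ∀ f : S.domain, ∃ z : T'.domain, (z : H) = (f : H) ∧ S f = T' z := by
      intro f
      obtain ⟨z, hz⟩ := hsurj (S f - cl • (f : H))
      have hzS : (z : H) ∈ S.domain := hle.1 z.2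
      have hSz : S ⟨(z : H), hzS⟩ = T' z := (hle.2 rfl).symm
      have hw : S (f - ⟨(z : H), hzS⟩) = cl • ((f : H) - (z : H)) := by
        rw [S.map_sub, hSz, smul_sub]
        calc S f - T' z
            = (S f - cl • (f : H)) - (T' z - cl • (z : H)) + (cl • (f : H) - cl • (z : H)) := by
              abel
          _ = cl • (f : H) - cl • (z : H) := by rw [hz]; abel
      have hw0 : ((f - ⟨(z : H), hzS⟩ : S.domain) : H) = 0 := by
        apply diss_inj S hS lam hlam
        rw [hw]
        congr 1
      have hfz : (f : H) = (z : H) := by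
        have h5 : (f : H) - (z : H) = 0 := by
          simpa using hw0
        exact sub_eq_zero.mp h5
      refine ⟨z, hfz.symm, ?_⟩
      have hfe : f = ⟨(z : H), hzS⟩ := Subtype.ext hfz
      rw [hfe, hSz]
    refine LinearPMap.ext ?_ ?_
    · apply le_antisymm
      · intro x hx
        obtain ⟨z, hz1, _⟩ := hkey ⟨x, hx⟩
        rw [show x = (z : H) from hz1.symm]
        exact z.2
      · exact hle.1
    · intro x hx hy
      obtain ⟨z, hz1, hz2⟩ := hkey ⟨x, hx⟩
      rw [hz2]
      congr 1
      exact Subtype.ext hz1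
  refine ⟨T', ⟨hdissT', hmax⟩, hTle, ?_, ?_, ?_⟩
  · ext x
    simp only [Set.mem_setOf_eq, SetLike.mem_coe]
    rw [hdomT', Submodule.mem_sup]
    constructor
    · rintro ⟨u, hu, v, hv, rfl⟩
      exact ⟨u, hu, v, (hNmem v).mp hv, rfl⟩
    · rintro ⟨u, hu, v, hv, rfl⟩
      exact ⟨u, hu, v, (hNmem v).mpr hv, rfl⟩
  · intro g hg
    exact (hTle.2 (x := g) (y := ⟨(g : H), hg⟩) rfl).symm
  · intro φ hφ hφ'
    have hφN : φ ∈ N := (hNmem φ).mpr hφ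
    have := hNople.2 (x := ⟨φ, hφN⟩) (y := ⟨φ, hφ'⟩) rfl
    rw [← this, hNopapp]
end
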